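/- arXiv:1311.4115 — 4 statements merged into one kernel-verified Lean document; each statement's English description precedes it below -/
import Mathlib

section
/- Let a_n, b_n ≥ 0 be sequences with a_n, b_n = n^{o(1/log log n)} (i.e. log(max(a_n, b_n, 2)) · log log n / log n → 0) and such that s_n²/d_n → ∞, where d_n = (a_n+b_n)/2 and s_n = (a_n−b_n)/2. Then one can a.a.s. recover the planted bisection up to an error of o(n) vertices: there exist functions τ_n from graphs on {1,…,n} to {+1,−1}^n such that if (σ, G) is drawn from 𝔾(n, a_n/n, b_n/n) then (1/n) |∑_{v=1}^n σ_v (τ_n(G))_v| → 1 in probability as n → ∞. -/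
open Filter Finset
open scoped Classical

noncomputable section

/-! ### The sample space of the stochastic block model -/

/-- Potential-edge index: ordered pairs `(u,v)` of vertices with `u < v`. -/
def EdgeIdx (n : ℕ) : Type := {p : Fin n × Fin n // p.1 < p.2}

instance (n : ℕ) : Fintype (EdgeIdx n) := by unfold EdgeIdx; infer_instance
instance (n : ℕ) : DecidableEq (EdgeIdx n) := by unfold EdgeIdx; infer_instance

/-- A graph on vertex set `Fin n`, given by the indicator of each potential edge. -/
def SGraph (n : ℕ) : Type := EdgeIdx n → Bool

instance (n : ℕ) : Fintype (SGraph n) := by unfold SGraph; infer_instance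
instance (n : ℕ) : DecidableEq (SGraph n) := by unfold SGraph; infer_instance

/-- Adjacency in a graph. -/
def adj {n : ℕ} (G : SGraph n) (u v : Fin n) : Bool :=
  if h : u < v then G ⟨(u, v), h⟩ else if h' : v < u then G ⟨(v, u), h'⟩ else false

/-- The ±1 value of a Boolean label. -/
def sgn (b : Bool) : ℝ := if b then 1 else -1

/-- Sample space of the block model: a labelling together with a graph. -/
def SampleSpace (n : ℕ) : Type := (Fin n → Bool) × SGraph n

instance (n : ℕ) : Fintype (SampleSpace n) := by unfold SampleSpace; infer_instance

/-- The probability mass of an outcome `ω` under the stochastic block model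
`𝔾(n, a/n, b/n)`: labels are uniform, and conditionally on the labels each
potential edge appears independently with probability `a/n` (equal labels)
or `b/n` (unequal labels). -/
def bmass (a b : ℝ) (n : ℕ) (ω : SampleSpace n) : ℝ :=
  (1 / 2) ^ n *
    ∏ e : EdgeIdx n,
      (if ω.2 e then (if ω.1 e.1.1 = ω.1 e.1.2 then a / n else b / n)
       else 1 - (if ω.1 e.1.1 = ω.1 e.1.2 then a / n else b / n))

/-- Probability of an event under the block model. -/
def bPr (a b : ℝ) (n : ℕ) (A : Set (SampleSpace n)) : ℝ :=
  ∑ ω : SampleSpace n, if ω ∈ A then bmass a b n ω else 0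

/-- Conditional expectation of `f` given the event `A`, under the block model. -/
def bCondE (a b : ℝ) (n : ℕ) (f : SampleSpace n → ℝ) (A : Set (SampleSpace n)) : ℝ :=
  (∑ ω : SampleSpace n, if ω ∈ A then bmass a b n ω * f ω else 0) / bPr a b n A

/-- Conditional probability of `B` given `A`, under the block model. -/
def bCondPr (a b : ℝ) (n : ℕ) (B A : Set (SampleSpace n)) : ℝ :=
  bPr a b n (B ∩ A) / bPr a b n A

/-- The event that the labelling agrees with `τ` on the set `U`. -/
def labelEvent {n : ℕ} (U : Finset (Fin n)) (τ : Fin n → Bool) : Set (SampleSpace n) :=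
  {ω | ∀ x ∈ U, ω.1 x = τ x}

/-- Mass of a graph under the block model conditioned on the full labelling `τ`. -/
def cmass {n : ℕ} (a b : ℝ) (τ : Fin n → Bool) (G : SGraph n) : ℝ :=
  ∏ e : EdgeIdx n,
    (if G e then (if τ e.1.1 = τ e.1.2 then a / n else b / n)
     else 1 - (if τ e.1.1 = τ e.1.2 then a / n else b / n))

/-- Expectation over the graph in the block model conditioned on the labelling `τ`. -/
def cE {n : ℕ} (a b : ℝ) (τ : Fin n → Bool) (f : SGraph n → ℝ) : ℝ :=
  ∑ G : SGraph n, cmass a b τ G * f G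

/-- Mass of a graph with independent edges, where the pair `{x,y}` is an edge with
probability `(d + τ_x τ_y s)/n`. -/
def lmass {n : ℕ} (s d : ℝ) (τ : Fin n → Bool) (G : SGraph n) : ℝ :=
  ∏ e : EdgeIdx n,
    (if G e then (d + sgn (τ e.1.1) * sgn (τ e.1.2) * s) / n
     else 1 - (d + sgn (τ e.1.1) * sgn (τ e.1.2) * s) / n)

/-- Expectation for the random graph with edge probabilities `(d + τ_x τ_y s)/n`. -/
def lE {n : ℕ} (s d : ℝ) (τ : Fin n → Bool) (f : SGraph n → ℝ) : ℝ :=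
  ∑ G : SGraph n, lmass s d τ G * f G

/-! ### Paths -/

/-- The `i`-th vertex of a path encoded as `γ : Fin (k+1) → β` (index clamped to `k`). -/
def pget {β : Type*} {k : ℕ} (γ : Fin (k + 1) → β) (i : ℕ) : β :=
  γ ⟨min i k, by omega⟩

/-- A path of length `k`: consecutive vertices are distinct. -/
def IsPath {n : ℕ} (k : ℕ) (γ : Fin (k + 1) → Fin n) : Prop :=
  ∀ i < k, pget γ i ≠ pget γ (i + 1)

/-- A non-backtracking path of length `k`. -/
def IsNB {n : ℕ} (k : ℕ) (γ : Fin (k + 1) → Fin n) : Prop :=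
  IsPath k γ ∧ ∀ i, i + 2 ≤ k → pget γ i ≠ pget γ (i + 2)

/-- A self-avoiding path of length `k`: all vertices distinct. -/
def IsSAW {n : ℕ} (k : ℕ) (γ : Fin (k + 1) → Fin n) : Prop :=
  IsPath k γ ∧ ∀ i ≤ k, ∀ j ≤ k, pget γ i = pget γ j → i = j

/-- The edge weight `W_e = 1_{e ∈ E(G)} - d/n`. -/
def W {n : ℕ} (d : ℝ) (G : SGraph n) (u v : Fin n) : ℝ :=
  (if adj G u v then 1 else 0) - d / n

/-- The weight `X_γ = ∏ W_{{γ(i-1), γ(i)}}` of a path `γ` of length `k`. -/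
def Xweight {n : ℕ} (d : ℝ) (G : SGraph n) (k : ℕ) (γ : Fin (k + 1) → Fin n) : ℝ :=
  ∏ i ∈ Finset.range k, W d G (pget γ i) (pget γ (i + 1))

/-- `Y_{u,v}`: the total weight of self-avoiding paths of length `k` from `u` to `v`. -/
def Ysaw {n : ℕ} (d : ℝ) (G : SGraph n) (k : ℕ) (u v : Fin n) : ℝ :=
  ∑ γ : Fin (k + 1) → Fin n,
    if IsSAW k γ ∧ pget γ 0 = u ∧ pget γ k = v then Xweight d G k γ else 0

/-- `N^{(k)}_{u,v}`: the total weight of non-backtracking paths of length `k` from `u` to `v`. -/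
def Nnb {n : ℕ} (d : ℝ) (G : SGraph n) (k : ℕ) (u v : Fin n) : ℝ :=
  ∑ γ : Fin (k + 1) → Fin n,
    if IsNB k γ ∧ pget γ 0 = u ∧ pget γ k = v then Xweight d G k γ else 0

/-! ### New, old, returning edges -/

/-- Edge `i` of `γ` (from `γ i` to `γ (i+1)`) is *new* if its head has not been
visited before. -/
def isNewEdge {n k : ℕ} (γ : Fin (k + 1) → Fin n) (i : ℕ) : Prop :=
  ∀ j ≤ i, pget γ j ≠ pget γ (i + 1)

/-- Edge `i` of `γ` is *old* if it coincides (as an unordered pair) with an earlier edge. -/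
def isOldEdge {n k : ℕ} (γ : Fin (k + 1) → Fin n) (i : ℕ) : Prop :=
  ∃ j < i, s(pget γ j, pget γ (j + 1)) = s(pget γ i, pget γ (i + 1))

/-- The number of new edges of a path. -/
def kNew {n k : ℕ} (γ : Fin (k + 1) → Fin n) : ℕ :=
  ((Finset.range k).filter fun i => isNewEdge γ i).card

/-- The number of returning edges of a path (neither new nor old). -/
def kRet {n k : ℕ} (γ : Fin (k + 1) → Fin n) : ℕ :=
  ((Finset.range k).filter fun i => ¬ isNewEdge γ i ∧ ¬ isOldEdge γ i).card

/-- Edge `i` of `γ₂` is *new with respect to `γ₁`* if its head is not a vertex of `γ₁`. -/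
def isNewWrt {n k : ℕ} (γ₁ γ₂ : Fin (k + 1) → Fin n) (i : ℕ) : Prop :=
  ∀ j ≤ k, pget γ₁ j ≠ pget γ₂ (i + 1)

/-- Edge `i` of `γ₂` is *old with respect to `γ₁`* if it appears (as an unordered
pair) among the edges of `γ₁`. -/
def isOldWrt {n k : ℕ} (γ₁ γ₂ : Fin (k + 1) → Fin n) (i : ℕ) : Prop :=
  ∃ j < k, s(pget γ₁ j, pget γ₁ (j + 1)) = s(pget γ₂ i, pget γ₂ (i + 1))

/-- The number of edges of `γ₂` that are new with respect to `γ₁`. -/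
def kNewWrt {n k : ℕ} (γ₁ γ₂ : Fin (k + 1) → Fin n) : ℕ :=
  ((Finset.range k).filter fun i => isNewWrt γ₁ γ₂ i).card

/-- The number of edges of `γ₂` that are returning with respect to `γ₁`. -/
def kRetWrt {n k : ℕ} (γ₁ γ₂ : Fin (k + 1) → Fin n) : ℕ :=
  ((Finset.range k).filter fun i => ¬ isNewWrt γ₁ γ₂ i ∧ ¬ isOldWrt γ₁ γ₂ i).card

/-! ### Multigraphs, tangles -/

/-- The support simple graph of a multigraph given by multiplicities `m`. -/
def msupp {n : ℕ} (m : Sym2 (Fin n) → ℕ) : SimpleGraph (Fin n) where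
  Adj x y := x ≠ y ∧ 0 < m s(x, y)
  symm := by
    constructor
    intro x y h
    exact ⟨h.1.symm, by rw [Sym2.eq_swap]; exact h.2⟩
  loopless := by constructor; intro x h; exact h.1 rfl

/-- The ball of radius `ℓ` around `v` in the multigraph `m`. -/
def mball {n : ℕ} (m : Sym2 (Fin n) → ℕ) (ℓ : ℕ) (v : Fin n) : Set (Fin n) :=
  {u | ∃ p : (msupp m).Walk v u, p.length ≤ ℓ}

/-- The number of edges (with multiplicity) of the multigraph `m` with both
endpoints in `S`. -/
def edgeCountIn {n : ℕ} (m : Sym2 (Fin n) → ℕ) (S : Set (Fin n)) : ℕ :=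
  ∑ e : Sym2 (Fin n), if ¬ e.IsDiag ∧ ∀ x ∈ e, x ∈ S then m e else 0

/-- A multigraph is `ℓ`-tangle-free if every neighbourhood of radius `ℓ` contains at
most one cycle, i.e. the number of edges (with multiplicity) inside every radius-`ℓ`
ball is at most the number of its vertices. -/
def MTangleFree {n : ℕ} (ℓ : ℕ) (m : Sym2 (Fin n) → ℕ) : Prop :=
  ∀ v : Fin n, edgeCountIn m (mball m ℓ v) ≤ (mball m ℓ v).ncard

/-- The multiplicity with which the path `γ` traverses each unordered edge. -/
def pmul {n k : ℕ} (γ : Fin (k + 1) → Fin n) : Sym2 (Fin n) → ℕ := fun e =>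
  ((Finset.range k).filter fun i => e = s(pget γ i, pget γ (i + 1))).card

/-- The number `t(γ)` of `ℓ`-tangles of a path `γ`: the minimal number of edges
(counted with multiplicity) whose deletion from the multigraph of `γ` leaves an
`ℓ`-tangle-free multigraph. -/
def tTangles {n k : ℕ} (ℓ : ℕ) (γ : Fin (k + 1) → Fin n) : ℕ :=
  sInf {t | ∃ c : Sym2 (Fin n) → ℕ, (∀ e, c e ≤ pmul γ e) ∧
      (∑ e : Sym2 (Fin n), c e) = t ∧ MTangleFree ℓ (fun e => pmul γ e - c e)}

/-- The multiplicity function (0/1) of the edges of a graph `G : SGraph n`. -/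
def gmult {n : ℕ} (G : SGraph n) : Sym2 (Fin n) → ℕ := fun e =>
  if ∃ x y : Fin n, adj G x y = true ∧ e = s(x, y) then 1 else 0

/-! ### SAW decompositions -/

/-- The set of (unordered) edges of a path. -/
def pathEdges {n k : ℕ} (γ : Fin (k + 1) → Fin n) : Set (Sym2 (Fin n)) :=
  {e | ∃ i < k, e = s(pget γ i, pget γ (i + 1))}

/-- The degree of a vertex in the graph `(V(γ), E(γ))` of a path. -/
def pathDeg {n k : ℕ} (γ : Fin (k + 1) → Fin n) (w : Fin n) : ℕ :=
  Set.ncard {x : Fin n | s(w, x) ∈ pathEdges γ}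

/-- `γ` backtracks at `w`. -/
def backtrackAt {n k : ℕ} (γ : Fin (k + 1) → Fin n) (w : Fin n) : Prop :=
  ∃ i, 0 < i ∧ i < k ∧ pget γ (i - 1) = pget γ (i + 1) ∧ pget γ i = w

/-- The number of backtracks of `γ`. -/
def numBacktracks {n k : ℕ} (γ : Fin (k + 1) → Fin n) : ℕ :=
  ((Finset.range k).filter fun i => 0 < i ∧ pget γ (i - 1) = pget γ (i + 1)).card

/-- The endpoint set `V_end` of the canonical SAW-decomposition: vertices of degree
at least 3, the two endpoints of `γ`, and the backtrack points of `γ`. -/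
def VEnd {n k : ℕ} (γ : Fin (k + 1) → Fin n) : Set (Fin n) :=
  {w | 3 ≤ pathDeg γ w} ∪ {pget γ 0, pget γ k} ∪ {w | backtrackAt γ w}

/-- The edges of the segment of `γ` between positions `j` and `j'`. -/
def segEdges {n k : ℕ} (γ : Fin (k + 1) → Fin n) (j j' : ℕ) : Set (Sym2 (Fin n)) :=
  {e | ∃ i, j ≤ i ∧ i < j' ∧ e = s(pget γ i, pget γ (i + 1))}

/-- `(j, j')` are two consecutive visit times of `γ` to the set `VE`. -/
def IsSegPair {n k : ℕ} (γ : Fin (k + 1) → Fin n) (VE : Set (Fin n)) (j j' : ℕ) : Prop :=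
  j < j' ∧ j' ≤ k ∧ pget γ j ∈ VE ∧ pget γ j' ∈ VE ∧
    ∀ i, j < i → i < j' → pget γ i ∉ VE

/-- The number of distinct segments in the SAW-decomposition of `γ` with endpoint
set `VE` (segments identified by their edge sets). -/
def numSegs {n k : ℕ} (γ : Fin (k + 1) → Fin n) (VE : Set (Fin n)) : ℕ :=
  Set.ncard {E : Set (Sym2 (Fin n)) | ∃ j j', IsSegPair γ VE j j' ∧ E = segEdges γ j j'}

/-- The edge set `E(Z^short(γ))` of the segments of the canonical SAW-decomposition
of `γ` of length at most `4ℓ`. -/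
def EZshort {n k : ℕ} (ℓ : ℕ) (γ : Fin (k + 1) → Fin n) : Set (Sym2 (Fin n)) :=
  {e | ∃ j j', IsSegPair γ (VEnd γ) j j' ∧ j' - j ≤ 4 * ℓ ∧ e ∈ segEdges γ j j'}

/-- The family `𝓕(γ)` of sets of short-segment edges. -/
def FFam {n k : ℕ} (ℓ : ℕ) (γ : Fin (k + 1) → Fin n) : Set (Finset (Sym2 (Fin n))) :=
  {F | ↑F ⊆ EZshort ℓ γ ∧ tTangles ℓ γ ≤ ∑ e ∈ F, pmul γ e ∧ F.card ≤ kRet γ - 1}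

end


/-!
The estimator is exhaustive search: it returns a labelling `τ` maximising the centred statistic
`sign(s) ∑_{u<v} τ_u τ_v (1_{uv ∈ G} - d/n)`. For the planted labelling `σ` and any competitor `τ`,
the difference of the two statistics is a sum of independent centred edge indicators over the
`M` pairs with `σ_u σ_v ≠ τ_u τ_v`, each with drift `|s|/n` and variance at most `3d/n`, so a
Chernoff bound lets `τ` win with probability at most `exp(-M s²/(12dn))`. If the overlap
`|⟨σ, τ⟩|` is at most `(1 - ε)n` then `4M = n² - ⟨σ, τ⟩² ≥ εn²`, and a union bound over the `2ⁿ`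
labellings bounds the failure probability by `2ⁿ exp(-εns²/(48d))`, which tends to `0` since
`s²/d → ∞`.
-/

namespace SBMRecovery

open Real

noncomputable section

lemma ite_nonpos_le_exp_neg_mul {y l : ℝ} (hl : 0 ≤ l) :
    (if y ≤ 0 then 1 else 0 : ℝ) ≤ exp (-(l * y)) := by
  split_ifs with hy
  · exact one_le_exp (by nlinarith)
  · exact (exp_pos _).le

lemma bernoulli_mgf_le {p q t : ℝ} (hp : p ∈ Set.Icc (0 : ℝ) 1) (hq : q ∈ Set.Icc (0 : ℝ) 1)
    (hpq : p ≤ 2 * q) (ht : |t| ≤ 1) :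
    p * exp (t * (1 - q)) + (1 - p) * exp (t * (0 - q)) ≤ exp (t * (p - q) + 3 * t ^ 2 * q) := by
  obtain ⟨hp0, hp1⟩ := hp
  obtain ⟨hq0, hq1⟩ := hq
  have hquad : ∀ c ∈ Set.Icc (0 : ℝ) 1,
      exp (t * (c - q)) ≤ 1 + t * (c - q) + t ^ 2 * (c - q) ^ 2 := by
    intro c hc
    have hcq : |c - q| ≤ 1 := abs_le.mpr ⟨by linarith [hc.1], by linarith [hc.2]⟩
    have h := (abs_le.mp (abs_exp_sub_one_sub_id_le (x := t * (c - q))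
      (by rw [abs_mul]; nlinarith [abs_nonneg t, abs_nonneg (c - q)]))).2
    nlinarith
  have h1 := hquad 1 ⟨zero_le_one, le_rfl⟩
  have h0 := hquad 0 ⟨le_rfl, zero_le_one⟩
  have hvar : p * (1 - q) ^ 2 + (1 - p) * q ^ 2 ≤ 3 * q := by nlinarith
  calc p * exp (t * (1 - q)) + (1 - p) * exp (t * (0 - q))
      ≤ 1 + t * (p - q) + t ^ 2 * (p * (1 - q) ^ 2 + (1 - p) * q ^ 2) := by
        nlinarith [mul_le_mul_of_nonneg_left h1 hp0,
          mul_le_mul_of_nonneg_left h0 (sub_nonneg.mpr hp1)]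
    _ ≤ t * (p - q) + 3 * t ^ 2 * q + 1 := by
        nlinarith [mul_le_mul_of_nonneg_left hvar (sq_nonneg t)]
    _ ≤ exp (t * (p - q) + 3 * t ^ 2 * q) := add_one_le_exp _

/-- The tilt `μ / (6q)` minimises `-λμ + 3λ²q`. -/
lemma bernoulli_mgf_le_of_drift {p q μ r : ℝ} (hp : p ∈ Set.Icc (0 : ℝ) 1) (hq : 0 < q)
    (hq1 : q ≤ 1) (hpq : p ≤ 2 * q) (hμ : 0 ≤ μ) (hμq : μ ≤ 6 * q) (hr : |r| ≤ 1)
    (hrμ : μ ≤ r * (p - q)) :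
    p * exp (-(μ / (6 * q) * r) * (1 - q)) + (1 - p) * exp (-(μ / (6 * q) * r) * (0 - q)) ≤
      exp (-(μ ^ 2 / (12 * q))) := by
  set l := μ / (6 * q) with hl
  have hl0 : 0 ≤ l := by positivity
  have hl1 : l ≤ 1 := by rw [hl, div_le_one (by positivity)]; exact hμq
  have ht : |-(l * r)| ≤ 1 := by
    rw [abs_neg, abs_mul, abs_of_nonneg hl0]
    nlinarith [abs_nonneg r]
  refine (bernoulli_mgf_le hp ⟨hq.le, hq1⟩ hpq ht).trans (exp_le_exp.mpr ?_)
  have hr2 : r ^ 2 ≤ 1 := by nlinarith [abs_nonneg r, sq_abs r]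
  calc -(l * r) * (p - q) + 3 * (-(l * r)) ^ 2 * q ≤ -(l * μ) + 3 * l ^ 2 * q := by
        nlinarith [mul_le_mul_of_nonneg_left hrμ hl0,
          mul_le_mul_of_nonneg_left hr2 (by positivity : (0 : ℝ) ≤ 3 * l ^ 2 * q)]
    _ = -(μ ^ 2 / (12 * q)) := by rw [hl]; field_simp; ring

section BernoulliProduct

variable {ι : Type*} [Fintype ι]

def bernoulliProdMass (p : ι → ℝ) (x : ι → Bool) : ℝ :=
  ∏ i, if x i then p i else 1 - p i

lemma bernoulliProdMass_nonneg {p : ι → ℝ} (hp : ∀ i, p i ∈ Set.Icc (0 : ℝ) 1)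
    (x : ι → Bool) : 0 ≤ bernoulliProdMass p x :=
  prod_nonneg fun i _ => by split <;> linarith [(hp i).1, (hp i).2]

variable [DecidableEq ι]

lemma sum_bernoulliProdMass_mul_prod (p : ι → ℝ) (f : ι → Bool → ℝ) :
    ∑ x, bernoulliProdMass p x * ∏ i, f i (x i) =
      ∏ i, (p i * f i true + (1 - p i) * f i false) := by
  simp only [bernoulliProdMass, ← prod_mul_distrib]
  rw [← Fintype.prod_sum fun i c => (if c then p i else 1 - p i) * f i c]
  simp

lemma sum_bernoulliProdMass (p : ι → ℝ) : ∑ x, bernoulliProdMass p x = 1 := by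
  simpa using sum_bernoulliProdMass_mul_prod p fun _ _ => 1

theorem bernoulliProd_chernoff {p : ι → ℝ} (hp : ∀ i, p i ∈ Set.Icc (0 : ℝ) 1) {q μ : ℝ}
    (hq : 0 < q) (hq1 : q ≤ 1) (hpq : ∀ i, p i ≤ 2 * q) (hμ : 0 ≤ μ) (hμq : μ ≤ 6 * q)
    (D : Finset ι) (r : ι → ℝ) (hr : ∀ i ∈ D, |r i| ≤ 1)
    (hrμ : ∀ i ∈ D, μ ≤ r i * (p i - q)) :
    ∑ x, bernoulliProdMass p x *
        (if ∑ i ∈ D, r i * ((if x i then 1 else 0) - q) ≤ 0 then 1 else 0) ≤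
      exp (-(#D * μ ^ 2 / (12 * q))) := by
  set l := μ / (6 * q)
  set t : ι → ℝ := fun i => if i ∈ D then -(l * r i) else 0 with ht
  have hedge : ∀ i, p i * exp (t i * (1 - q)) + (1 - p i) * exp (t i * (0 - q)) ≤
      if i ∈ D then exp (-(μ ^ 2 / (12 * q))) else 1 := fun i => by
    by_cases hi : i ∈ D
    · simpa only [ht, hi, if_true] using
        bernoulli_mgf_le_of_drift (hp i) hq hq1 (hpq i) hμ hμq (hr i hi) (hrμ i hi)
    · simp [ht, hi]
  have htilt : ∀ x : ι → Bool, ∑ i, t i * ((if x i then 1 else 0) - q) =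
      -(l * ∑ i ∈ D, r i * ((if x i then 1 else 0) - q)) := fun x => by
    simp only [ht, ite_mul, zero_mul]
    rw [sum_ite_mem, univ_inter, mul_sum, ← sum_neg_distrib]
    exact sum_congr rfl fun i _ => by ring
  calc ∑ x, bernoulliProdMass p x *
        (if ∑ i ∈ D, r i * ((if x i then 1 else 0) - q) ≤ 0 then 1 else 0)
      ≤ ∑ x, bernoulliProdMass p x * ∏ i, exp (t i * ((if x i then 1 else 0) - q)) := by
        gcongr with x
        · exact bernoulliProdMass_nonneg hp x
        · rw [← exp_sum, htilt]
          exact ite_nonpos_le_exp_neg_mul (by positivity)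
    _ = ∏ i, (p i * exp (t i * (1 - q)) + (1 - p i) * exp (t i * (0 - q))) := by
        rw [sum_bernoulliProdMass_mul_prod p fun i c => exp (t i * ((if c then 1 else 0) - q))]
        simp only [if_true, Bool.false_eq_true, if_false]
    _ ≤ ∏ i, if i ∈ D then exp (-(μ ^ 2 / (12 * q))) else 1 :=
        prod_le_prod (fun i _ => add_nonneg (mul_nonneg (hp i).1 (exp_pos _).le)
          (mul_nonneg (sub_nonneg.2 (hp i).2) (exp_pos _).le)) fun i _ => hedge i
    _ = exp (-(#D * μ ^ 2 / (12 * q))) := by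
        rw [prod_ite_mem, univ_inter, prod_const, ← exp_nat_mul]
        ring_nf

end BernoulliProduct

section BlockModel

variable {n : ℕ}

lemma sgn_mul_self (c : Bool) : sgn c * sgn c = 1 := by cases c <;> norm_num [sgn]

lemma abs_sgn (c : Bool) : |sgn c| = 1 := by cases c <;> norm_num [sgn]

def edgeSign (σ : Fin n → Bool) (e : EdgeIdx n) : ℝ := sgn (σ e.1.1) * sgn (σ e.1.2)

lemma edgeSign_mul_self (σ : Fin n → Bool) (e : EdgeIdx n) :
    edgeSign σ e * edgeSign σ e = 1 := by
  unfold edgeSign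
  linear_combination (sgn (σ e.1.2) * sgn (σ e.1.2)) * sgn_mul_self (σ e.1.1) +
    sgn_mul_self (σ e.1.2)

lemma abs_edgeSign (σ : Fin n → Bool) (e : EdgeIdx n) : |edgeSign σ e| = 1 := by
  rw [edgeSign, abs_mul, abs_sgn, abs_sgn, one_mul]

lemma abs_edgeSign_mul (σ : Fin n → Bool) (e : EdgeIdx n) (s : ℝ) :
    |edgeSign σ e * s| = |s| := by
  rw [abs_mul, abs_edgeSign, one_mul]

lemma edgeSign_eq_neg_of_ne {σ τ : Fin n → Bool} {e : EdgeIdx n}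
    (h : edgeSign σ e ≠ edgeSign τ e) : edgeSign τ e = -edgeSign σ e := by
  have hsq : (edgeSign τ e - edgeSign σ e) * (edgeSign τ e + edgeSign σ e) = 0 := by
    linear_combination edgeSign_mul_self τ e - edgeSign_mul_self σ e
  rcases mul_eq_zero.mp hsq with h' | h'
  · exact absurd (sub_eq_zero.mp h').symm h
  · linarith

lemma cmass_eq_lmass (a b : ℝ) (σ : Fin n → Bool) (G : SGraph n) :
    cmass a b σ G = lmass ((a - b) / 2) ((a + b) / 2) σ G := by
  refine prod_congr rfl fun e _ => ?_
  have hp : (if σ e.1.1 = σ e.1.2 then a / n else b / n) =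
      ((a + b) / 2 + sgn (σ e.1.1) * sgn (σ e.1.2) * ((a - b) / 2)) / n := by
    cases σ e.1.1 <;> cases σ e.1.2 <;> norm_num [sgn] <;> ring
  rw [hp]

lemma bmass_eq (a b : ℝ) (ω : SampleSpace n) :
    bmass a b n ω = (1 / 2) ^ n * lmass ((a - b) / 2) ((a + b) / 2) ω.1 ω.2 := by
  rw [← cmass_eq_lmass]; rfl

lemma lE_eq_sum_bernoulliProdMass (s d : ℝ) (σ : Fin n → Bool) (f : SGraph n → ℝ) :
    lE s d σ f = ∑ x : EdgeIdx n → Bool,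
      bernoulliProdMass (fun e => (d + edgeSign σ e * s) / n) x * f x := rfl

variable {s d : ℝ}

lemma edgeProb_mem_Icc (hs : |s| ≤ d) (hdn : d + |s| ≤ n) (σ : Fin n → Bool) (e : EdgeIdx n) :
    (d + edgeSign σ e * s) / n ∈ Set.Icc (0 : ℝ) 1 := by
  obtain ⟨h1, h2⟩ := abs_le.mp (abs_edgeSign_mul σ e s).le
  exact ⟨div_nonneg (by linarith) (Nat.cast_nonneg n),
    div_le_one_of_le₀ (by linarith) (Nat.cast_nonneg n)⟩

lemma lmass_nonneg (hs : |s| ≤ d) (hdn : d + |s| ≤ n) (σ : Fin n → Bool) (G : SGraph n) :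
    0 ≤ lmass s d σ G :=
  bernoulliProdMass_nonneg (edgeProb_mem_Icc hs hdn σ) G

lemma lE_mono (hs : |s| ≤ d) (hdn : d + |s| ≤ n) (σ : Fin n → Bool) {f g : SGraph n → ℝ}
    (h : ∀ G, f G ≤ g G) : lE s d σ f ≤ lE s d σ g :=
  sum_le_sum fun G _ => mul_le_mul_of_nonneg_left (h G) (lmass_nonneg hs hdn σ G)

lemma lE_sum {β : Type*} (σ : Fin n → Bool) (B : Finset β) (f : β → SGraph n → ℝ) :
    lE s d σ (fun G => ∑ τ ∈ B, f τ G) = ∑ τ ∈ B, lE s d σ (f τ) := by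
  simp only [lE, mul_sum]
  exact sum_comm

lemma lE_one (σ : Fin n → Bool) : lE s d σ (fun _ => 1) = 1 := by
  rw [lE_eq_sum_bernoulliProdMass]
  simpa only [mul_one] using
    sum_bernoulliProdMass fun e : EdgeIdx n => (d + edgeSign σ e * s) / n

lemma abs_sub_half_le_add_half {a b : ℝ} (ha : 0 ≤ a) (hb : 0 ≤ b) :
    |(a - b) / 2| ≤ (a + b) / 2 :=
  abs_le.mpr ⟨by linarith, by linarith⟩

lemma add_half_add_abs_sub_half_le {a b c : ℝ} (ha : a ≤ c) (hb : b ≤ c) :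
    (a + b) / 2 + |(a - b) / 2| ≤ c := by
  rcases le_total b a with h | h
  · rw [abs_of_nonneg (by linarith)]; linarith
  · rw [abs_of_nonpos (by linarith)]; linarith

lemma bPr_eq_sum_lE (a b : ℝ) (A : Set (SampleSpace n)) :
    bPr a b n A = (1 / 2) ^ n *
      ∑ σ, lE ((a - b) / 2) ((a + b) / 2) σ fun G => if (σ, G) ∈ A then 1 else 0 := by
  have hprod : bPr a b n A =
      ∑ ω : (Fin n → Bool) × SGraph n, if ω ∈ A then bmass a b n ω else 0 := rfl
  rw [hprod, Fintype.sum_prod_type, mul_sum]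
  refine sum_congr rfl fun σ _ => ?_
  rw [lE, mul_sum]
  refine sum_congr rfl fun G _ => ?_
  split_ifs
  · rw [mul_one]; exact bmass_eq a b (σ, G)
  · rw [mul_zero, mul_zero]

lemma bPr_nonneg {a b : ℝ} (ha : 0 ≤ a) (hb : 0 ≤ b) (han : a ≤ n) (hbn : b ≤ n)
    (A : Set (SampleSpace n)) : 0 ≤ bPr a b n A := by
  rw [bPr_eq_sum_lE]
  refine mul_nonneg (by positivity) (sum_nonneg fun σ _ => sum_nonneg fun G _ => ?_)
  refine mul_nonneg (lmass_nonneg (abs_sub_half_le_add_half ha hb)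
    (add_half_add_abs_sub_half_le han hbn) σ G) ?_
  beta_reduce
  split_ifs <;> norm_num

lemma sum_bmass (a b : ℝ) : ∑ ω : SampleSpace n, bmass a b n ω = 1 := by
  have hprod : ∑ ω : SampleSpace n, bmass a b n ω =
      ∑ σ : Fin n → Bool, (1 / 2) ^ n * lE ((a - b) / 2) ((a + b) / 2) σ fun _ => 1 := by
    refine (Fintype.sum_prod_type fun ω : (Fin n → Bool) × SGraph n => bmass a b n ω).trans ?_
    refine sum_congr rfl fun σ _ => ?_
    simp only [lE, mul_one, mul_sum]
    exact sum_congr rfl fun G _ => bmass_eq a b (σ, G)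
  simp only [hprod, lE_one, mul_one, sum_const, card_univ, Fintype.card_fun, Fintype.card_bool,
    Fintype.card_fin, nsmul_eq_mul]
  push_cast
  rw [← mul_pow]
  norm_num

lemma bPr_add_bPr_compl (a b : ℝ) (A : Set (SampleSpace n)) :
    bPr a b n A + bPr a b n Aᶜ = 1 := by
  rw [← sum_bmass a b, bPr, bPr, ← sum_add_distrib]
  refine sum_congr rfl fun ω _ => ?_
  by_cases h : ω ∈ A <;> simp [h]

end BlockModel

section Overlap

variable {n : ℕ}

def overlap (σ τ : Fin n → Bool) : ℝ := ∑ v, sgn (σ v) * sgn (τ v)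

def disagreeEdges (σ τ : Fin n → Bool) : Finset (EdgeIdx n) :=
  {e | edgeSign σ e ≠ edgeSign τ e}

lemma sum_edgeIdx_eq_sum_sum_ite (g : Fin n → Fin n → ℝ) :
    ∑ e : EdgeIdx n, g e.1.1 e.1.2 = ∑ u, ∑ v, if u < v then g u v else 0 := by
  rw [← Fintype.sum_prod_type', ← sum_filter]
  exact (sum_subtype _ (fun p => by simp) fun p : Fin n × Fin n => g p.1 p.2).symm

lemma sum_sum_eq_sum_diag_add_two_mul_sum_edgeIdx (F : Fin n → Fin n → ℝ)
    (hF : ∀ u v, F u v = F v u) :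
    ∑ u, ∑ v, F u v = ∑ v, F v v + 2 * ∑ e : EdgeIdx n, F e.1.1 e.1.2 := by
  have hsplit : ∀ u v, F u v = ((if u < v then F u v else 0) + (if u = v then F u v else 0)) +
      (if v < u then F v u else 0) := by
    intro u v
    rcases lt_trichotomy u v with h | rfl | h
    · simp [h, h.ne, h.not_gt]
    · simp
    · simp [h, h.ne', h.not_gt, hF u v]
  have hswap : ∑ u, ∑ v, (if v < u then F v u else 0) = ∑ u, ∑ v, if u < v then F u v else 0 :=
    sum_comm
  calc ∑ u, ∑ v, F u v
      = ∑ u, ∑ v, (((if u < v then F u v else 0) + (if u = v then F u v else 0)) +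
          (if v < u then F v u else 0)) :=
        sum_congr rfl fun u _ => sum_congr rfl fun v _ => hsplit u v
    _ = ∑ v, F v v + 2 * ∑ e : EdgeIdx n, F e.1.1 e.1.2 := by
        simp only [sum_add_distrib, hswap, sum_ite_eq, mem_univ, if_true,
          sum_edgeIdx_eq_sum_sum_ite F]
        ring

lemma four_mul_card_disagreeEdges (σ τ : Fin n → Bool) :
    4 * (#(disagreeEdges σ τ) : ℝ) = n ^ 2 - overlap σ τ ^ 2 := by
  set x : Fin n → ℝ := fun v => sgn (σ v) * sgn (τ v) with hx
  have hxx : ∀ v, x v * x v = 1 := fun v => by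
    linear_combination (sgn (τ v) * sgn (τ v)) * sgn_mul_self (σ v) + sgn_mul_self (τ v)
  have hedge : ∀ e : EdgeIdx n, x e.1.1 * x e.1.2 =
      1 - 2 * (if edgeSign σ e ≠ edgeSign τ e then 1 else 0) := by
    intro e
    have hprod : x e.1.1 * x e.1.2 = edgeSign σ e * edgeSign τ e := by
      simp only [hx, edgeSign]; ring
    rw [hprod]
    split_ifs with h
    · rw [edgeSign_eq_neg_of_ne h]; linarith [edgeSign_mul_self σ e]
    · rw [not_not.mp h]; linarith [edgeSign_mul_self τ e]
  have hov : overlap σ τ ^ 2 = ∑ u, ∑ v, x u * x v := by rw [overlap, sq, sum_mul_sum]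
  have hS := sum_sum_eq_sum_diag_add_two_mul_sum_edgeIdx (fun u v => x u * x v)
    fun u v => mul_comm _ _
  have hn := sum_sum_eq_sum_diag_add_two_mul_sum_edgeIdx (n := n) (fun _ _ => (1 : ℝ))
    fun _ _ => rfl
  rw [hov, hS]
  simp only [hxx, hedge, sum_const, card_univ, Fintype.card_fin, nsmul_eq_mul, mul_one,
    sum_sub_distrib, ← mul_sum, sum_boole] at hn ⊢
  simp only [disagreeEdges, ne_eq]
  linear_combination -hn

lemma abs_overlap_le (σ τ : Fin n → Bool) : |overlap σ τ| ≤ n := by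
  refine (abs_sum_le_sum_abs _ _).trans ?_
  simp [abs_mul, abs_sgn]

lemma abs_overlap_le_of_not_le (hn : 0 < n) {σ τ : Fin n → Bool} {ε : ℝ}
    (h : ¬ |(1 / (n : ℝ)) * |overlap σ τ| - 1| ≤ ε) : |overlap σ τ| ≤ (1 - ε) * n := by
  have hn' : (0 : ℝ) < n := Nat.cast_pos.mpr hn
  have hle : (1 / (n : ℝ)) * |overlap σ τ| ≤ 1 := by
    rw [one_div_mul_eq_div, div_le_one hn']; exact abs_overlap_le σ τ
  rw [abs_of_nonpos (by linarith), not_le, neg_sub, lt_sub_comm, one_div_mul_eq_div,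
    div_lt_iff₀ hn'] at h
  exact h.le

end Overlap

section Estimator

variable {n : ℕ}

/-- The factor `sign s` makes the maximiser align with `σ` also in the disassortative case
`a < b`. -/
def score (s d : ℝ) (G : SGraph n) (τ : Fin n → Bool) : ℝ :=
  SignType.sign s * ∑ e, edgeSign τ e * ((if G e then 1 else 0) - d / n)

def estimator (s d : ℝ) (n : ℕ) (G : SGraph n) : Fin n → Bool :=
  Classical.choose (Finite.exists_max (score s d G))

lemma score_le_score_estimator (s d : ℝ) (G : SGraph n) (τ : Fin n → Bool) :
    score s d G τ ≤ score s d G (estimator s d n G) :=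
  Classical.choose_spec (Finite.exists_max (score s d G)) τ

lemma score_sub_score (s d : ℝ) (G : SGraph n) (σ τ : Fin n → Bool) :
    score s d G σ - score s d G τ = 2 * ∑ e ∈ disagreeEdges σ τ,
      SignType.sign s * edgeSign σ e * ((if G e then 1 else 0) - d / n) := by
  rw [score, score, ← mul_sub, ← sum_sub_distrib, disagreeEdges, sum_filter, mul_sum, mul_sum]
  refine sum_congr rfl fun e _ => ?_
  by_cases h : edgeSign σ e = edgeSign τ e
  · rw [if_neg (not_not.mpr h), h]; ring
  · rw [if_pos h, edgeSign_eq_neg_of_ne h]; ring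

lemma abs_sign_le_one (s : ℝ) : |(SignType.sign s : ℝ)| ≤ 1 := by
  rcases lt_trichotomy s 0 with h | h | h <;> simp [h]

variable {s d : ℝ}

theorem lE_score_le_score_le (hs : |s| ≤ d) (hdn : d + |s| ≤ n) (hd : 0 < d)
    (σ τ : Fin n → Bool) :
    lE s d σ (fun G => if score s d G σ ≤ score s d G τ then 1 else 0) ≤
      exp (-(#(disagreeEdges σ τ) * s ^ 2 / (12 * d * n))) := by
  have hn : (0 : ℝ) < n := by linarith [abs_nonneg s]
  have hevent : ∀ G : SGraph n, score s d G σ ≤ score s d G τ ↔ ∑ e ∈ disagreeEdges σ τ,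
      SignType.sign s * edgeSign σ e * ((if G e then 1 else 0) - d / n) ≤ 0 := fun G => by
    rw [← sub_nonpos, score_sub_score]
    constructor <;> intro h <;> linarith
  simp only [hevent, lE_eq_sum_bernoulliProdMass]
  have hchern := bernoulliProd_chernoff (edgeProb_mem_Icc hs hdn σ) (q := d / n) (μ := |s| / n)
    (by positivity) (div_le_one_of_le₀ (by linarith [abs_nonneg s]) hn.le) ?_ (by positivity) ?_
    (disagreeEdges σ τ) (fun e => SignType.sign s * edgeSign σ e) ?_ ?_
  · convert hchern using 3
    rw [div_pow, sq_abs]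
    field_simp
  · intro e
    rw [mul_div_assoc', div_le_div_iff_of_pos_right hn]
    linarith [le_abs_self (edgeSign σ e * s), abs_edgeSign_mul σ e s]
  · rw [mul_div_assoc', div_le_div_iff_of_pos_right hn]
    linarith
  · intro e _
    rw [abs_mul, abs_edgeSign, mul_one]
    exact abs_sign_le_one s
  · intro e _
    apply le_of_eq
    calc |s| / n = SignType.sign s * s * (edgeSign σ e * edgeSign σ e) / n := by
          rw [sign_mul_self, edgeSign_mul_self, mul_one]
      _ = SignType.sign s * edgeSign σ e * ((d + edgeSign σ e * s) / n - d / n) := by ring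

theorem lE_score_le_score_le_of_abs_overlap_le (hs : |s| ≤ d) (hdn : d + |s| ≤ n) (hd : 0 < d)
    {ε : ℝ} (hε : 0 < ε) {σ τ : Fin n → Bool} (hS : |overlap σ τ| ≤ (1 - ε) * n) :
    lE s d σ (fun G => if score s d G σ ≤ score s d G τ then 1 else 0) ≤
      exp (-(ε * n * s ^ 2 / (48 * d))) := by
  refine (lE_score_le_score_le hs hdn hd σ τ).trans (exp_le_exp.mpr (neg_le_neg ?_))
  have hn : (0 : ℝ) < n := by linarith [abs_nonneg s]
  have hsq : overlap σ τ ^ 2 ≤ ((1 - ε) * n) ^ 2 := by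
    rw [← sq_abs]
    exact pow_le_pow_left₀ (abs_nonneg _) hS 2
  have hcard : ε * n ^ 2 ≤ 4 * #(disagreeEdges σ τ) := by
    rw [four_mul_card_disagreeEdges]
    nlinarith [mul_nonneg (mul_nonneg hε.le hn.le) ((abs_nonneg _).trans hS)]
  calc ε * n * s ^ 2 / (48 * d) = ε * n ^ 2 * s ^ 2 / (48 * d * n) := by field_simp
    _ ≤ 4 * #(disagreeEdges σ τ) * s ^ 2 / (48 * d * n) := by gcongr
    _ = #(disagreeEdges σ τ) * s ^ 2 / (12 * d * n) := by field_simp; ring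

theorem lE_estimator_fail_le (hs : |s| ≤ d) (hdn : d + |s| ≤ n) (hd : 0 < d) {ε : ℝ}
    (hε : 0 < ε) (σ : Fin n → Bool) :
    lE s d σ (fun G => if |(1 / (n : ℝ)) * |overlap σ (estimator s d n G)| - 1| ≤ ε then 0 else 1)
      ≤ 2 ^ n * exp (-(ε * n * s ^ 2 / (48 * d))) := by
  have hn : 0 < n := by
    have : (0 : ℝ) < n := by linarith [abs_nonneg s]
    exact_mod_cast this
  set B := univ.filter fun τ => |overlap σ τ| ≤ (1 - ε) * n
  have hunion : ∀ G,
      (if |(1 / (n : ℝ)) * |overlap σ (estimator s d n G)| - 1| ≤ ε then 0 else 1 : ℝ) ≤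
        ∑ τ ∈ B, if score s d G σ ≤ score s d G τ then 1 else 0 := fun G => by
    split_ifs with hsucc
    · exact sum_nonneg fun τ _ => by split_ifs <;> norm_num
    · have hB : estimator s d n G ∈ B :=
        mem_filter.mpr ⟨mem_univ _, abs_overlap_le_of_not_le hn hsucc⟩
      refine le_trans ?_ (single_le_sum (fun τ _ => ?_) hB)
      · rw [if_pos (score_le_score_estimator s d G σ)]
      · split_ifs <;> norm_num
  calc _ ≤ lE s d σ (fun G => ∑ τ ∈ B, if score s d G σ ≤ score s d G τ then 1 else 0) :=
        lE_mono hs hdn σ hunion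
    _ = ∑ τ ∈ B, lE s d σ (fun G => if score s d G σ ≤ score s d G τ then 1 else 0) :=
        lE_sum σ B _
    _ ≤ ∑ _τ ∈ B, exp (-(ε * n * s ^ 2 / (48 * d))) := sum_le_sum fun τ hτ =>
        lE_score_le_score_le_of_abs_overlap_le hs hdn hd hε (mem_filter.mp hτ).2
    _ ≤ 2 ^ n * exp (-(ε * n * s ^ 2 / (48 * d))) := by
        rw [sum_const, nsmul_eq_mul]
        refine mul_le_mul_of_nonneg_right ?_ (exp_pos _).le
        exact_mod_cast (card_le_univ B).trans_eq (by simp)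

theorem bPr_estimator_fail_le {a b : ℝ} (ha : 0 ≤ a) (hb : 0 ≤ b) (han : a ≤ n) (hbn : b ≤ n)
    (hd : 0 < (a + b) / 2) {ε : ℝ} (hε : 0 < ε) :
    bPr a b n {ω | |(1 / (n : ℝ)) *
        |overlap ω.1 (estimator ((a - b) / 2) ((a + b) / 2) n ω.2)| - 1| ≤ ε}ᶜ ≤
      2 ^ n * exp (-(ε * n * ((a - b) / 2) ^ 2 / (48 * ((a + b) / 2)))) := by
  set E := 2 ^ n * exp (-(ε * n * ((a - b) / 2) ^ 2 / (48 * ((a + b) / 2))))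
  rw [bPr_eq_sum_lE]
  calc (1 / 2) ^ n * ∑ σ, _ ≤ (1 / 2 : ℝ) ^ n * ∑ _σ : Fin n → Bool, E := by
        gcongr with σ
        refine Eq.trans_le (congrArg _ (funext fun G => ?_)) (lE_estimator_fail_le
          (abs_sub_half_le_add_half ha hb) (add_half_add_abs_sub_half_le han hbn) hd hε σ)
        -- the same event, read once on `SampleSpace n` and once on the pair `(σ, G)`
        split_ifs <;> first | rfl | (rename_i hfail hsucc; exact absurd hsucc hfail)
    _ = E := by
        rw [sum_const, card_univ, Fintype.card_fun, Fintype.card_bool, Fintype.card_fin,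
          nsmul_eq_mul]
        push_cast
        rw [← mul_assoc, ← mul_pow]
        norm_num

end Estimator

lemma eventually_le_natCast_of_tendsto_log {x : ℕ → ℝ}
    (hx : Tendsto (fun n : ℕ => log (max (x n) 2) * log (log n) / log n) atTop (nhds 0)) :
    ∀ᶠ n : ℕ in atTop, x n ≤ n := by
  have hlog : Tendsto (fun n : ℕ => log n) atTop atTop :=
    tendsto_log_atTop.comp tendsto_natCast_atTop_atTop
  have hloglog : Tendsto (fun n : ℕ => log (log n)) atTop atTop := tendsto_log_atTop.comp hlog
  filter_upwards [hlog.eventually_gt_atTop 0, hloglog.eventually_ge_atTop 1,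
    hx.eventually_lt_const one_pos] with n hL hLL hlt
  have hM : 0 ≤ log (max (x n) 2) := log_nonneg (by linarith [le_max_right (x n) 2])
  have hlogM : log (max (x n) 2) < log n := by
    rw [div_lt_one hL] at hlt
    nlinarith
  have hn : (0 : ℝ) < n := Nat.cast_pos.mpr (Nat.pos_of_ne_zero fun h => by simp [h] at hL)
  have hMn := (log_lt_log_iff (by positivity) hn).mp hlogM
  linarith [le_max_left (x n) 2]

lemma two_pow_mul_exp_neg_le {n : ℕ} {y : ℝ} (hy : 2 * n ≤ y) : 2 ^ n * exp (-y) ≤ exp (-n) := by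
  have h2 : (2 : ℝ) ^ n ≤ exp n := by
    rw [← mul_one (n : ℝ), exp_nat_mul]
    exact pow_le_pow_left₀ zero_le_two (by linarith [add_one_le_exp 1]) n
  calc (2 : ℝ) ^ n * exp (-y) ≤ exp n * exp (-y) := by gcongr
    _ ≤ exp (-n) := by rw [← exp_add]; exact exp_le_exp.mpr (by linarith)

theorem bPr_estimator_fail_le_exp_neg {n : ℕ} {a b : ℝ} (ha : 0 ≤ a) (hb : 0 ≤ b) (han : a ≤ n)
    (hbn : b ≤ n) {ε : ℝ} (hε : 0 < ε) (hsd : 96 / ε ≤ ((a - b) / 2) ^ 2 / ((a + b) / 2)) :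
    bPr a b n {ω | |(1 / (n : ℝ)) *
        |overlap ω.1 (estimator ((a - b) / 2) ((a + b) / 2) n ω.2)| - 1| ≤ ε}ᶜ ≤ exp (-n) := by
  have hd : 0 < (a + b) / 2 := by
    refine lt_of_le_of_ne (by linarith) fun h => ?_
    rw [← h, div_zero] at hsd
    linarith [show 0 < 96 / ε by positivity]
  refine (bPr_estimator_fail_le ha hb han hbn hd hε).trans (two_pow_mul_exp_neg_le ?_)
  calc 2 * (n : ℝ) = ε * n / 48 * (96 / ε) := by field_simp; ring
    _ ≤ ε * n / 48 * (((a - b) / 2) ^ 2 / ((a + b) / 2)) := by gcongr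
    _ = ε * n * ((a - b) / 2) ^ 2 / (48 * ((a + b) / 2)) := by field_simp

end

end SBMRecovery

open SBMRecovery Real

/-- For sequences `a n, b n ≥ 0` with
`log(max(a n, b n, 2)) · log log n / log n → 0` and `s_n²/d_n → ∞`, one can a.a.s.
recover the planted bisection up to `o(n)` errors: there are estimators `τ` such
that `(1/n)|∑_v σ_v τ_v| → 1` in probability. -/
theorem clustering_accurate (a b : ℕ → ℝ) (ha : ∀ n, 0 ≤ a n) (hb : ∀ n, 0 ≤ b n)
    (hgrowth : Filter.Tendsto
      (fun n : ℕ =>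
        Real.log (max (max (a n) (b n)) 2) * Real.log (Real.log n) / Real.log n)
      Filter.atTop (nhds 0))
    (hsd : Filter.Tendsto
      (fun n : ℕ => ((a n - b n) / 2) ^ 2 / ((a n + b n) / 2))
      Filter.atTop Filter.atTop) :
    ∃ τ : (n : ℕ) → SGraph n → (Fin n → Bool),
      ∀ ε > (0 : ℝ),
        Filter.Tendsto
          (fun n : ℕ => bPr (a n) (b n) n
            {ω : SampleSpace n |
              |(1 / (n : ℝ)) * |∑ v : Fin n, sgn (ω.1 v) * sgn (τ n ω.2 v)| - 1| ≤ ε})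
          Filter.atTop (nhds 1) := by
  refine ⟨fun n => estimator ((a n - b n) / 2) ((a n + b n) / 2) n, fun ε hε => ?_⟩
  set fail : (n : ℕ) → Set (SampleSpace n) := fun n => {ω | |(1 / (n : ℝ)) *
    |overlap ω.1 (estimator ((a n - b n) / 2) ((a n + b n) / 2) n ω.2)| - 1| ≤ ε}ᶜ
  have hbound : ∀ᶠ n : ℕ in atTop,
      0 ≤ bPr (a n) (b n) n (fail n) ∧ bPr (a n) (b n) n (fail n) ≤ exp (-n) := by
    filter_upwards [eventually_le_natCast_of_tendsto_log hgrowth,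
      hsd.eventually_ge_atTop (96 / ε)] with n hmax hC
    have han : a n ≤ n := (le_max_left _ _).trans hmax
    have hbn : b n ≤ n := (le_max_right _ _).trans hmax
    exact ⟨bPr_nonneg (ha n) (hb n) han hbn _,
      bPr_estimator_fail_le_exp_neg (ha n) (hb n) han hbn hε hC⟩
  have hfail : Tendsto (fun n => bPr (a n) (b n) n (fail n)) atTop (nhds 0) :=
    squeeze_zero' (hbound.mono fun _ h => h.1) (hbound.mono fun _ h => h.2)
      (tendsto_exp_atBot.comp (tendsto_neg_atTop_atBot.comp tendsto_natCast_atTop_atTop))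
  refine (by simpa using tendsto_const_nhds.sub hfail :
    Tendsto (fun n => 1 - bPr (a n) (b n) n (fail n)) atTop (nhds 1)).congr fun n => ?_
  exact (eq_sub_of_add_eq (bPr_add_bPr_compl _ _ _)).symm
end

section
/- Under the Assumption, the first moment of the self-avoiding path weight satisfies E[Y_{u,v} | σ_U] = (1 + n^{−1+o(1)}) σ_u σ_v s^k / n, uniformly: for every δ > 0 there exist η > 0 and N such that for all n ≥ N, all distinct vertices u, v, all U ⊆ V with {u,v} ⊆ U and |U| ≤ n^η, and all labellings σ_U of U, |n · E[Y_{u,v} | σ_U] / (σ_u σ_v s^k) − 1| ≤ n^{−1+δ}, where k = ⌈α log n⌉ and the conditional expectation is with respect to the block model given the labels of the vertices in U. -/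
open Filter Finset
open scoped Classical

/-!
Conditionally on all labels, the edges of a self-avoiding path are distinct, hence
independent, and `E[W_{xy} | σ] = σ_x σ_y s/n`; the signs telescope along the path, so each
self-avoiding path from `u` to `v` contributes exactly `σ_u σ_v (s/n)^k`, whatever the labels
off `{u, v}`. Thus `n E[Y_{u,v} | σ_U] / (σ_u σ_v s^k)` is the number of such paths divided by
`n^{k-1}`, namely `(n-2)(n-3)⋯(n-k) / n^{k-1} ∈ [1 - k²/n, 1]`, and `k = O(log n)` gives
`k²/n ≤ n^{-1+δ}` for large `n`.
-/

lemma sgn_mul_self (b : Bool) : sgn b * sgn b = 1 := by cases b <;> norm_num [sgn]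

lemma sgn_mul_sgn (x y : Bool) : sgn x * sgn y = if x = y then 1 else -1 := by
  cases x <;> cases y <;> norm_num [sgn]

lemma sgn_ne_zero (b : Bool) : sgn b ≠ 0 := by cases b <;> norm_num [sgn]

theorem Fin.prod_univ_castSucc_mul_succ_of_mul_self {M : Type*} [CommMonoid M] {k : ℕ}
    (f : Fin (k + 1) → M) (hf : ∀ i, f i * f i = 1) :
    ∏ i : Fin k, f i.castSucc * f i.succ = f 0 * f (Fin.last k) := by
  induction k with
  | zero => simpa using (hf 0).symm
  | succ k ih =>
    rw [Fin.prod_univ_castSucc]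
    simp only [Fin.succ_castSucc]
    rw [ih (fun i => f i.castSucc) (fun i => hf _)]
    calc f 0 * f (Fin.last k).castSucc * (f (Fin.last k).castSucc * f (Fin.last (k + 1)))
        = f 0 * (f (Fin.last k).castSucc * f (Fin.last k).castSucc) * f (Fin.last (k + 1)) := by
          simp only [mul_assoc]
      _ = f 0 * f (Fin.last (k + 1)) := by rw [hf, mul_one]

theorem sum_prod_bernoulli_mul_prod {ι : Type*} [Fintype ι] [DecidableEq ι] (p : ι → ℝ)
    (T : Finset ι) (f : ι → Bool → ℝ) :
    ∑ G : ι → Bool, (∏ i, if G i then p i else 1 - p i) * ∏ i ∈ T, f i (G i) =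
      ∏ i ∈ T, (p i * f i true + (1 - p i) * f i false) := by
  simp_rw [← Fintype.prod_ite_mem T, ← Finset.prod_mul_distrib]
  rw [← Fintype.prod_sum fun i b => (if b then p i else 1 - p i) * if i ∈ T then f i b else 1]
  refine Finset.prod_congr rfl fun i _ => ?_
  split_ifs <;> simp

section

variable {n k : ℕ}

lemma pget_of_le (γ : Fin (k + 1) → Fin n) {i : ℕ} (h : i ≤ k) :
    pget γ i = γ ⟨i, Nat.lt_succ_of_le h⟩ :=
  congrArg γ (Fin.ext (Nat.min_eq_left h))

lemma pget_zero (γ : Fin (k + 1) → Fin n) : pget γ 0 = γ 0 := pget_of_le γ k.zero_le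

lemma pget_self (γ : Fin (k + 1) → Fin n) : pget γ k = γ (Fin.last k) := pget_of_le γ le_rfl

lemma isSAW_iff_injective (γ : Fin (k + 1) → Fin n) : IsSAW k γ ↔ Function.Injective γ := by
  constructor
  · rintro ⟨-, hinj⟩ i j hij
    refine Fin.ext (hinj i (Nat.lt_succ_iff.mp i.isLt) j (Nat.lt_succ_iff.mp j.isLt) ?_)
    rwa [pget_of_le γ (Nat.lt_succ_iff.mp i.isLt), pget_of_le γ (Nat.lt_succ_iff.mp j.isLt)]
  · intro hγ
    have hinj : ∀ i ≤ k, ∀ j ≤ k, pget γ i = pget γ j → i = j := fun i hi j hj hij => by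
      rw [pget_of_le γ hi, pget_of_le γ hj] at hij
      exact congrArg Fin.val (hγ hij)
    exact ⟨fun i hi h => by have := hinj i hi.le (i + 1) hi h; omega, hinj⟩

lemma Xweight_eq_prod (d : ℝ) (G : SGraph n) (γ : Fin (k + 1) → Fin n) :
    Xweight d G k γ = ∏ i : Fin k, W d G (γ i.castSucc) (γ i.succ) := by
  rw [Xweight, Finset.prod_range]
  refine Finset.prod_congr rfl fun i _ => ?_
  rw [pget_of_le γ i.isLt.le, pget_of_le γ i.isLt]
  rfl

namespace EdgeIdx

def ofNe {x y : Fin n} (h : x ≠ y) : EdgeIdx n :=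
  if hlt : x < y then ⟨(x, y), hlt⟩ else ⟨(y, x), h.lt_or_gt.resolve_left hlt⟩

lemma ofNe_fst_snd {x y : Fin n} (h : x ≠ y) :
    ((ofNe h).1.1 = x ∧ (ofNe h).1.2 = y) ∨ ((ofNe h).1.1 = y ∧ (ofNe h).1.2 = x) := by
  by_cases hlt : x < y
  · rw [show ofNe h = ⟨(x, y), hlt⟩ from dif_pos hlt]
    exact Or.inl ⟨rfl, rfl⟩
  · rw [show ofNe h = ⟨(y, x), h.lt_or_gt.resolve_left hlt⟩ from dif_neg hlt]
    exact Or.inr ⟨rfl, rfl⟩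

lemma eq_or_eq_of_ofNe_eq {x y z w : Fin n} {h : x ≠ y} {h' : z ≠ w}
    (he : ofNe h = ofNe h') : (x = z ∧ y = w) ∨ (x = w ∧ y = z) := by
  have hxy := ofNe_fst_snd h
  have hzw := ofNe_fst_snd h'
  rw [he] at hxy
  rcases hxy with ⟨a1, a2⟩ | ⟨a1, a2⟩ <;> rcases hzw with ⟨b1, b2⟩ | ⟨b1, b2⟩ <;>
    rw [a1] at b1 <;> rw [a2] at b2 <;> subst b1 b2 <;> tauto

end EdgeIdx

lemma adj_eq_ofNe (G : SGraph n) {x y : Fin n} (h : x ≠ y) :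
    adj G x y = G (EdgeIdx.ofNe h) := by
  unfold adj
  rcases h.lt_or_gt with hl | hl
  · rw [show EdgeIdx.ofNe h = ⟨(x, y), hl⟩ from dif_pos hl, dif_pos hl]
  · rw [show EdgeIdx.ofNe h = ⟨(y, x), hl⟩ from dif_neg (asymm hl), dif_neg (asymm hl),
      dif_pos hl]

noncomputable def edgeProb (a b : ℝ) (τ : Fin n → Bool) (e : EdgeIdx n) : ℝ :=
  if τ e.1.1 = τ e.1.2 then a / n else b / n

lemma cmass_eq_prod_edgeProb (a b : ℝ) (τ : Fin n → Bool) (G : SGraph n) :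
    cmass a b τ G = ∏ e, if G e then edgeProb a b τ e else 1 - edgeProb a b τ e := rfl

lemma edgeProb_sub_mean (a b : ℝ) (τ : Fin n → Bool) (e : EdgeIdx n) :
    edgeProb a b τ e - (a + b) / 2 / n = sgn (τ e.1.1) * sgn (τ e.1.2) * ((a - b) / 2 / n) := by
  rw [edgeProb, sgn_mul_sgn]
  split_ifs <;> ring

lemma edgeProb_ofNe_sub_mean (a b : ℝ) (τ : Fin n → Bool) {x y : Fin n} (h : x ≠ y) :
    edgeProb a b τ (EdgeIdx.ofNe h) - (a + b) / 2 / n =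
      sgn (τ x) * sgn (τ y) * ((a - b) / 2 / n) := by
  rw [edgeProb_sub_mean]
  rcases EdgeIdx.ofNe_fst_snd h with ⟨h1, h2⟩ | ⟨h1, h2⟩ <;> rw [h1, h2]
  ring

lemma sum_sgraph (f : SGraph n → ℝ) :
    ∑ G : SGraph n, f G = ∑ G : EdgeIdx n → Bool, f G := rfl

lemma cE_one (a b : ℝ) (τ : Fin n → Bool) : cE a b τ (fun _ => 1) = 1 := by
  simpa [cE, cmass_eq_prod_edgeProb, sum_sgraph] using
    sum_prod_bernoulli_mul_prod (edgeProb a b τ) ∅ fun _ _ => 1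

theorem cE_Xweight_of_injective (a b : ℝ) (τ : Fin n → Bool) {γ : Fin (k + 1) → Fin n}
    (hγ : Function.Injective γ) :
    cE a b τ (fun G => Xweight ((a + b) / 2) G k γ) =
      sgn (τ (γ 0)) * sgn (τ (γ (Fin.last k))) * ((a - b) / 2 / n) ^ k := by
  have hne (i : Fin k) : γ i.castSucc ≠ γ i.succ := hγ.ne Fin.castSucc_lt_succ.ne
  set E : Fin k → EdgeIdx n := fun i => EdgeIdx.ofNe (hne i)
  have hE : Function.Injective E := fun i j hij => by
    rcases EdgeIdx.eq_or_eq_of_ofNe_eq hij with ⟨h1, -⟩ | ⟨h1, h2⟩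
    · exact Fin.castSucc_injective _ (hγ h1)
    · have h1 := congrArg Fin.val (hγ h1)
      have h2 := congrArg Fin.val (hγ h2)
      simp only [Fin.val_castSucc, Fin.val_succ] at h1 h2
      omega
  set w : Bool → ℝ := fun x => (if x then 1 else 0) - (a + b) / 2 / n
  have hX (G : SGraph n) :
      Xweight ((a + b) / 2) G k γ = ∏ e ∈ Finset.univ.map ⟨E, hE⟩, w (G e) := by
    rw [Xweight_eq_prod, Finset.prod_map]
    refine Finset.prod_congr rfl fun i _ => ?_
    rw [W, adj_eq_ofNe G (hne i)]
    rfl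
  calc cE a b τ (fun G => Xweight ((a + b) / 2) G k γ)
      = ∏ e ∈ Finset.univ.map ⟨E, hE⟩,
          (edgeProb a b τ e * w true + (1 - edgeProb a b τ e) * w false) := by
        simp only [cE, hX, cmass_eq_prod_edgeProb, sum_sgraph]
        exact sum_prod_bernoulli_mul_prod (edgeProb a b τ) _ fun _ x => w x
    _ = ∏ i : Fin k, sgn (τ (γ i.castSucc)) * sgn (τ (γ i.succ)) * ((a - b) / 2 / n) := by
        rw [Finset.prod_map]
        refine Finset.prod_congr rfl fun i _ => ?_
        rw [← edgeProb_ofNe_sub_mean a b τ (hne i)]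
        simp only [w, Function.Embedding.coeFn_mk, if_true, Bool.false_eq_true, if_false, E]
        ring
    _ = _ := by
        rw [Finset.prod_mul_distrib, Finset.prod_const, Finset.card_univ, Fintype.card_fin,
          Fin.prod_univ_castSucc_mul_succ_of_mul_self (fun i => sgn (τ (γ i))) fun i =>
            sgn_mul_self _]

noncomputable def sawFinset (n k : ℕ) (u v : Fin n) : Finset (Fin (k + 1) → Fin n) :=
  Finset.univ.filter fun γ => IsSAW k γ ∧ pget γ 0 = u ∧ pget γ k = v

lemma mem_sawFinset {u v : Fin n} {γ : Fin (k + 1) → Fin n} :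
    γ ∈ sawFinset n k u v ↔ Function.Injective γ ∧ γ 0 = u ∧ γ (Fin.last k) = v := by
  rw [sawFinset, Finset.mem_filter, isSAW_iff_injective, pget_zero, pget_self]
  exact and_iff_right (Finset.mem_univ γ)

lemma Ysaw_eq_sum (d : ℝ) (G : SGraph n) (u v : Fin n) :
    Ysaw d G k u v = ∑ γ ∈ sawFinset n k u v, Xweight d G k γ := by
  rw [Ysaw, sawFinset, Finset.sum_filter]

theorem cE_Ysaw (a b : ℝ) (τ : Fin n → Bool) (u v : Fin n) :
    cE a b τ (fun G => Ysaw ((a + b) / 2) G k u v) =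
      (sawFinset n k u v).card * (sgn (τ u) * sgn (τ v) * ((a - b) / 2 / n) ^ k) := by
  have hX : ∀ γ ∈ sawFinset n k u v, cE a b τ (fun G => Xweight ((a + b) / 2) G k γ) =
      sgn (τ u) * sgn (τ v) * ((a - b) / 2 / n) ^ k := fun γ hγ => by
    obtain ⟨hinj, h0, hk⟩ := mem_sawFinset.mp hγ
    rw [cE_Xweight_of_injective a b τ hinj, h0, hk]
  simp only [cE, Ysaw_eq_sum, Finset.mul_sum]
  rw [Finset.sum_comm, ← nsmul_eq_mul, ← Finset.sum_const]
  exact Finset.sum_congr rfl hX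

/-- A self-avoiding path of length `m + 1` from `u ≠ v` is determined by its `m` interior
vertices, which are distinct and avoid `u` and `v`. -/
theorem card_sawFinset {u v : Fin n} (huv : u ≠ v) (m : ℕ) :
    (sawFinset n (m + 1) u v).card = (n - 2).descFactorial m := by
  set C := {x : Fin n // x ≠ u ∧ x ≠ v}
  have hC : Fintype.card C = n - 2 := by
    rw [Fintype.card_subtype, show Finset.univ.filter (fun x : Fin n => x ≠ u ∧ x ≠ v) =
      Finset.univ \ {u, v} by ext; simp, Finset.card_univ_sdiff, Finset.card_pair huv,
      Fintype.card_fin]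
  have hemb : (n - 2).descFactorial m = Fintype.card (Fin m ↪ C) := by
    rw [Fintype.card_embedding_eq, hC, Fintype.card_fin]
  rw [hemb, ← Finset.card_univ]
  refine Finset.card_bij'
    (fun γ hγ =>
      ⟨fun j => ⟨γ j.castSucc.succ, fun h => ?_, fun h => ?_⟩, fun i j h => ?_⟩)
    (fun f _ => Fin.cons u (Fin.snoc (fun j => (f j).1) v))
    (fun _ _ => Finset.mem_univ _) (fun f _ => ?_) (fun γ hγ => ?_) (fun f _ => ?_)
  · obtain ⟨hinj, h0, -⟩ := mem_sawFinset.mp hγ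
    exact Fin.succ_ne_zero _ (hinj (h.trans h0.symm))
  · obtain ⟨hinj, -, hk⟩ := mem_sawFinset.mp hγ
    have := congrArg Fin.val (hinj (h.trans hk.symm))
    simp only [Fin.val_succ, Fin.val_castSucc, Fin.val_last] at this
    omega
  · simpa using (mem_sawFinset.mp hγ).1 (congrArg Subtype.val h)
  · refine mem_sawFinset.mpr ⟨Fin.cons_injective_of_injective ?_ ?_, Fin.cons_zero _ _, ?_⟩
    · rintro ⟨j, hj⟩
      induction j using Fin.lastCases with
      | last => exact huv (by simpa using hj.symm)
      | cast j => exact (f j).2.1 (by simpa using hj)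
    · exact Fin.snoc_injective_of_injective (Subtype.val_injective.comp f.injective)
        fun ⟨j, hj⟩ => (f j).2.2 hj
    · rw [Fin.cons_last, Fin.snoc_last]
  · obtain ⟨hinj, h0, hk⟩ := mem_sawFinset.mp hγ
    funext i
    induction i using Fin.cases with
    | zero => simpa using h0.symm
    | succ i =>
      induction i using Fin.lastCases with
      | last => simpa [Fin.succ_last] using hk.symm
      | cast j => simp only [Fin.cons_succ, Fin.snoc_castSucc]; rfl
  · ext j
    simp [Fin.cons_succ, Fin.snoc_castSucc]

lemma mem_labelEvent {U : Finset (Fin n)} {τ : Fin n → Bool} {ω : SampleSpace n} :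
    ω ∈ labelEvent U τ ↔ ∀ x ∈ U, ω.1 x = τ x := Iff.rfl

lemma sum_labelEvent_bmass_mul (a b : ℝ) (U : Finset (Fin n)) (τ : Fin n → Bool)
    (f : SGraph n → ℝ) :
    (∑ ω : SampleSpace n, if ω ∈ labelEvent U τ then bmass a b n ω * f ω.2 else 0) =
      (1 / 2) ^ n *
        ∑ σ : Fin n → Bool, if ∀ x ∈ U, σ x = τ x then cE a b σ f else 0 := by
  rw [show (∑ ω : SampleSpace n, _) = ∑ ω : (Fin n → Bool) × SGraph n, _ from rfl,
    Fintype.sum_prod_type, Finset.mul_sum]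
  refine Finset.sum_congr rfl fun σ _ => ?_
  split_ifs with hσ
  · rw [cE, Finset.mul_sum]
    exact Finset.sum_congr rfl fun G _ =>
      (if_pos (mem_labelEvent.mpr hσ)).trans (mul_assoc _ (cmass a b σ G) (f G))
  · rw [mul_zero]
    exact Finset.sum_eq_zero fun G _ => if_neg (hσ ∘ mem_labelEvent.mp)

/-- The conditional law of the graph given `σ_U` is a mixture of its laws given the full
labellings that extend `σ_U`. -/
theorem bCondE_labelEvent_of_cE_eq (a b : ℝ) (U : Finset (Fin n)) (τ : Fin n → Bool)
    (f : SGraph n → ℝ) (c : ℝ)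
    (h : ∀ σ : Fin n → Bool, (∀ x ∈ U, σ x = τ x) → cE a b σ f = c) :
    bCondE a b n (fun ω => f ω.2) (labelEvent U τ) = c := by
  set P : ℝ := (1 / 2) ^ n * ∑ σ : Fin n → Bool, if ∀ x ∈ U, σ x = τ x then 1 else 0
  have hPr : bPr a b n (labelEvent U τ) = P := by
    have := sum_labelEvent_bmass_mul a b U τ fun _ => 1
    simp only [mul_one, cE_one] at this
    exact this
  have hP : 0 < P :=
    mul_pos (by positivity) (Finset.sum_pos' (fun σ _ => by positivity) ⟨τ, by simp⟩)
  rw [bCondE, sum_labelEvent_bmass_mul, hPr, div_eq_iff hP.ne', mul_comm c, mul_assoc,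
    Finset.sum_mul]
  congr 1
  refine Finset.sum_congr rfl fun σ _ => ?_
  split_ifs with hσ
  exacts [by rw [h σ hσ, one_mul], by rw [zero_mul]]

lemma eventually_sq_natCeil_mul_log_le_rpow (α : ℝ) {δ : ℝ} (hδ : 0 < δ) :
    ∀ᶠ n : ℕ in atTop, (⌈α * Real.log n⌉₊ : ℝ) ^ 2 ≤ (n : ℝ) ^ δ := by
  set c := |α| + 1
  have hreal : ∀ᶠ x : ℝ in atTop, (c * Real.log x) ^ 2 ≤ x ^ δ := by
    filter_upwards [(isLittleO_log_rpow_rpow_atTop 2 hδ).def (by positivity : 0 < 1 / c ^ 2),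
      eventually_gt_atTop 0] with x hx hx0
    rw [Real.rpow_two, Real.norm_of_nonneg (sq_nonneg _),
      Real.norm_of_nonneg (Real.rpow_nonneg hx0.le _)] at hx
    calc (c * Real.log x) ^ 2 = c ^ 2 * Real.log x ^ 2 := mul_pow _ _ _
      _ ≤ c ^ 2 * (1 / c ^ 2 * x ^ δ) := by gcongr
      _ = x ^ δ := by field_simp [show c ≠ 0 by positivity]
  filter_upwards [tendsto_natCast_atTop_atTop.eventually hreal,
    tendsto_natCast_atTop_atTop.eventually (Real.tendsto_log_atTop.eventually_ge_atTop 1)]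
    with n hn hlog
  have hceil : (⌈α * Real.log n⌉₊ : ℝ) ≤ c * Real.log n :=
    calc (⌈α * Real.log n⌉₊ : ℝ) ≤ ⌈|α| * Real.log n⌉₊ := by
          gcongr
          exact (le_abs_self α)
      _ ≤ |α| * Real.log n + 1 := (Nat.ceil_lt_add_one (by positivity)).le
      _ ≤ c * Real.log n := by simp only [c]; nlinarith
  calc (⌈α * Real.log n⌉₊ : ℝ) ^ 2 ≤ (c * Real.log n) ^ 2 := by gcongr
    _ ≤ (n : ℝ) ^ δ := hn

lemma descFactorial_div_pow_le_one (n m : ℕ) :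
    ((n - 2).descFactorial m : ℝ) / (n : ℝ) ^ m ≤ 1 := by
  rcases Nat.eq_zero_or_pos n with rfl | hn
  · rcases m with _ | m <;> simp
  refine div_le_one_of_le₀ ?_ (by positivity)
  exact_mod_cast (Nat.descFactorial_le_pow _ _).trans (Nat.pow_le_pow_left (Nat.sub_le n 2) m)

lemma one_sub_sq_div_le_descFactorial_div_pow {n : ℕ} (hn : 0 < n) (m : ℕ) :
    1 - ((m : ℝ) + 1) ^ 2 / n ≤ ((n - 2).descFactorial m : ℝ) / (n : ℝ) ^ m := by
  have hnR : (0 : ℝ) < n := by exact_mod_cast hn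
  by_cases hsmall : (n : ℝ) < ((m : ℝ) + 1) ^ 2
  · have : 1 < ((m : ℝ) + 1) ^ 2 / n := (one_lt_div hnR).mpr hsmall
    have : 0 ≤ ((n - 2).descFactorial m : ℝ) / (n : ℝ) ^ m := by positivity
    linarith
  have hmn : (m : ℝ) + 1 ≤ n := by nlinarith
  have hmn' : m + 1 ≤ n := by exact_mod_cast hmn
  have hpow : ((n : ℝ) - (m + 1)) ^ m ≤ (n - 2).descFactorial m := by
    have h := (Nat.pow_le_pow_left (show n - (m + 1) ≤ n - 2 + 1 - m by omega) m).trans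
      (Nat.pow_sub_le_descFactorial (n - 2) m)
    have hcast : ((n - (m + 1) : ℕ) : ℝ) = n - (m + 1) := by
      push_cast [Nat.cast_sub hmn']
      ring
    rw [← hcast]
    exact_mod_cast h
  have hratio : (1 + -(((m : ℝ) + 1) / n)) ^ m = ((n : ℝ) - (m + 1)) ^ m / (n : ℝ) ^ m := by
    rw [← div_pow]
    congr 1
    field_simp
    ring
  have hfrac : ((m : ℝ) + 1) / n ≤ 1 := (div_le_one hnR).mpr hmn
  calc 1 - ((m : ℝ) + 1) ^ 2 / n ≤ 1 + (m : ℝ) * -(((m : ℝ) + 1) / n) := by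
        have : (m : ℝ) * (((m : ℝ) + 1) / n) ≤ ((m : ℝ) + 1) ^ 2 / n := by
          rw [mul_div_assoc', sq]
          gcongr
          linarith
        linarith
    _ ≤ (1 + -(((m : ℝ) + 1) / n)) ^ m := one_add_mul_le_pow (by linarith) m
    _ = ((n : ℝ) - (m + 1)) ^ m / (n : ℝ) ^ m := hratio
    _ ≤ ((n - 2).descFactorial m : ℝ) / (n : ℝ) ^ m := by gcongr

lemma abs_descFactorial_div_pow_sub_one_le {n : ℕ} (hn : 0 < n) (m : ℕ) :
    |((n - 2).descFactorial m : ℝ) / (n : ℝ) ^ m - 1| ≤ ((m : ℝ) + 1) ^ 2 / n := by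
  have hlow := one_sub_sq_div_le_descFactorial_div_pow hn m
  have hup := descFactorial_div_pow_le_one n m
  have : 0 ≤ ((m : ℝ) + 1) ^ 2 / n := by positivity
  exact abs_le.mpr ⟨by linarith, by linarith⟩

theorem bCondE_Ysaw (a b : ℝ) {U : Finset (Fin n)} {τ : Fin n → Bool} {u v : Fin n}
    (hu : u ∈ U) (hv : v ∈ U) :
    bCondE a b n (fun ω => Ysaw ((a + b) / 2) ω.2 k u v) (labelEvent U τ) =
      (sawFinset n k u v).card * (sgn (τ u) * sgn (τ v) * ((a - b) / 2 / n) ^ k) :=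
  bCondE_labelEvent_of_cE_eq a b U τ (fun G => Ysaw ((a + b) / 2) G k u v) _ fun σ hσ => by
    rw [cE_Ysaw, hσ u hu, hσ v hv]

end

theorem first_moment_saw_general (a b s d : ℕ → ℝ) (α lam : ℝ)
    (hs : ∀ n, s n = (a n - b n) / 2) (hd : ∀ n, d n = (a n + b n) / 2)
    (hlam : 1 < lam) (hsd : ∀ n : ℕ, lam ≤ (s n) ^ 2 / d n)
    (hα : 0 < α) :
    ∀ δ > (0 : ℝ), ∃ η > (0 : ℝ), ∃ N : ℕ, ∀ n ≥ N, ∀ u v : Fin n, u ≠ v →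
      ∀ U : Finset (Fin n), u ∈ U → v ∈ U → (U.card : ℝ) ≤ (n : ℝ) ^ η →
        ∀ τ : Fin n → Bool,
          |(n : ℝ) *
              bCondE (a n) (b n) n
                (fun ω => Ysaw (d n) ω.2 ⌈α * Real.log n⌉₊ u v)
                (labelEvent U τ) /
              (sgn (τ u) * sgn (τ v) * (s n) ^ ⌈α * Real.log n⌉₊) - 1|
            ≤ (n : ℝ) ^ (-1 + δ) := by
  intro δ hδ
  obtain ⟨N, hN⟩ := eventually_atTop.mp (eventually_sq_natCeil_mul_log_le_rpow α hδ)
  refine ⟨1, one_pos, max N 2, fun n hn u v huv U hu hv _ τ => ?_⟩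
  have hn2 : 2 ≤ n := le_of_max_le_right hn
  have hn0 : (0 : ℝ) < n := by exact_mod_cast (by omega : 0 < n)
  have hs0 : s n ≠ 0 := fun h => by
    have := hsd n
    rw [h, sq, zero_mul, zero_div] at this
    linarith
  obtain ⟨m, hm⟩ : ∃ m, ⌈α * Real.log n⌉₊ = m + 1 := Nat.exists_eq_add_one.mpr <|
    Nat.ceil_pos.mpr (mul_pos hα (Real.log_pos (by exact_mod_cast hn2)))
  have hk2 := hN n (le_of_max_le_left hn)
  rw [hm, Nat.cast_succ] at hk2
  have hnormalize : (n : ℝ) * ((n - 2).descFactorial m * (sgn (τ u) * sgn (τ v) *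
      (s n / n) ^ (m + 1))) / (sgn (τ u) * sgn (τ v) * s n ^ (m + 1)) =
      (n - 2).descFactorial m / (n : ℝ) ^ m := by
    have := sgn_ne_zero (τ u)
    have := sgn_ne_zero (τ v)
    rw [div_pow]
    field_simp
    ring
  rw [hm, hd, bCondE_Ysaw (a n) (b n) hu hv, ← hs, card_sawFinset huv, hnormalize]
  calc _ ≤ ((m : ℝ) + 1) ^ 2 / n := abs_descFactorial_div_pow_sub_one_le (by omega) m
    _ ≤ (n : ℝ) ^ δ / n := by gcongr
    _ = (n : ℝ) ^ (-1 + δ) := by rw [Real.rpow_add hn0, Real.rpow_neg_one, inv_mul_eq_div]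

/-- Under the Assumption, the first moment of the self-avoiding path
weight satisfies `E[Y_{u,v} | σ_U] = (1 + n^{-1+o(1)}) σ_u σ_v s^k / n`, uniformly over
distinct `u, v`, sets `U ∋ u, v` of size at most `n^η`, and labellings of `U`, where
`k = ⌈α log n⌉`. -/
theorem first_moment_saw (a b s d : ℕ → ℝ) (α lam : ℝ)
    (hs : ∀ n, s n = (a n - b n) / 2) (hd : ∀ n, d n = (a n + b n) / 2)
    (ha : ∀ n, 0 ≤ a n) (hb : ∀ n, 0 ≤ b n)
    (hlam : 1 < lam) (hsd : ∀ n : ℕ, lam ≤ (s n) ^ 2 / d n)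
    (hgrowth : Filter.Tendsto
      (fun n : ℕ =>
        Real.log (max (max |s n| (d n)) 2) * Real.log (Real.log n) / Real.log n)
      Filter.atTop (nhds 0))
    (hα : 0 < α)
    (hαn : ∀ n : ℕ, (n : ℝ) ^ 2 * d n ^ (α * Real.log n)
      ≤ ((s n) ^ 2) ^ (α * Real.log n)) :
    ∀ δ > (0 : ℝ), ∃ η > (0 : ℝ), ∃ N : ℕ, ∀ n ≥ N, ∀ u v : Fin n, u ≠ v →
      ∀ U : Finset (Fin n), u ∈ U → v ∈ U → (U.card : ℝ) ≤ (n : ℝ) ^ η →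
        ∀ τ : Fin n → Bool,
          |(n : ℝ) *
              bCondE (a n) (b n) n
                (fun ω => Ysaw (d n) ω.2 ⌈α * Real.log n⌉₊ u v)
                (labelEvent U τ) /
              (sgn (τ u) * sgn (τ v) * (s n) ^ ⌈α * Real.log n⌉₊) - 1|
            ≤ (n : ℝ) ^ (-1 + δ) :=
  first_moment_saw_general a b s d α lam hs hd hlam hsd hα
end

section
/- Let G be a graph on n vertices with adjacency matrix A, let D be the diagonal matrix of vertex degrees, I the n×n identity, and 𝟙 the n×n all-ones matrix, and fix a real d. Define N^{(k)} by N^{(0)} = I and N^{(k)}_{u,v} = ∑_{γ ∈ Γ^NB_{k,u,v}} X_γ for k ≥ 1; define Q^{(k,ρ)} = ∑_{j=0}^{⌊k/2⌋} ρ^{2j} N^{(k−2j)} for k ≥ 0 and Q^{(k,ρ)} = 0 for k < 0; define the 4n×4n block matrices M = [[(1−d/n)A, −(1−d/n)²(D−I), −(d/n)(𝟙−A−I), −(d/n)²((n−1)I−D)], [I, 0, 0, 0], [(1−d/n)A, −(1−d/n)²D, −(d/n)(𝟙−A−I), −(d/n)²((n−2)I−D)], [0, 0, I, 0]] and M̂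 = [[(1−d/n)A, −(1−d/n)²D, −(d/n)(𝟙−A−I), −(d/n)²((n−1)I−D)], [0,0,0,0], [0,0,0,0], [0,0,0,0]]; and define the 4n×n matrix 𝒬_k whose four n×n blocks, from top to bottom, are Q^{(k,1−d/n)}, Q^{(k−1,1−d/n)}, Q^{(k,−d/n)}, Q^{(k−1,−d/n)}. Then for every k ≥ 1, M 𝒬_k = 𝒬_{k+1}, and M̂ 𝒬_k equals the 4n×n matrix whose top n×n block is N^{(k+1)} and whose other three blocks are zero. -/
open Filter Finset
open scoped Classical

noncomputable section

/-- Adjacency matrix of a graph. -/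
def adjMat {n : ℕ} (G : SGraph n) : Matrix (Fin n) (Fin n) ℝ :=
  Matrix.of fun u v => if adj G u v then 1 else 0

/-- Diagonal matrix of vertex degrees. -/
def degMat {n : ℕ} (G : SGraph n) : Matrix (Fin n) (Fin n) ℝ :=
  Matrix.diagonal fun u => ((Finset.univ.filter fun v => adj G u v).card : ℝ)

/-- All-ones matrix. -/
def onesMat (n : ℕ) : Matrix (Fin n) (Fin n) ℝ := Matrix.of fun _ _ => 1

/-- The matrix `N^{(k)}` of non-backtracking path weights, with `N^{(0)} = I`. -/
def Nmat {n : ℕ} (d : ℝ) (G : SGraph n) : ℕ → Matrix (Fin n) (Fin n) ℝ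
  | 0 => 1
  | (k + 1) => Matrix.of fun u v =>
      ∑ γ : Fin (k + 1 + 1) → Fin n,
        if IsNB (k + 1) γ ∧ pget γ 0 = u ∧ pget γ (k + 1) = v
        then Xweight d G (k + 1) γ else 0

/-- The matrix `Q^{(k,ρ)} = ∑_{j=0}^{⌊k/2⌋} ρ^{2j} N^{(k-2j)}`, equal to `0` for `k < 0`. -/
def Qmat {n : ℕ} (d : ℝ) (G : SGraph n) (k : ℤ) (ρ : ℝ) : Matrix (Fin n) (Fin n) ℝ :=
  if k < 0 then 0
  else ∑ j ∈ Finset.range (k.toNat / 2 + 1), ρ ^ (2 * j) • Nmat d G (k.toNat - 2 * j)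

/-- The `4n × 4n` block matrix `𝓜`. -/
def bigM {n : ℕ} (d : ℝ) (G : SGraph n) :
    Matrix (Fin 4 × Fin n) (Fin 4 × Fin n) ℝ :=
  Matrix.of fun p q =>
    (![![ (1 - d / n) • adjMat G,
          (-((1 - d / n) ^ 2)) • (degMat G - 1),
          (-(d / n)) • (onesMat n - adjMat G - 1),
          (-((d / n) ^ 2)) • (((n : ℝ) - 1) • (1 : Matrix (Fin n) (Fin n) ℝ) - degMat G)],
       ![ (1 : Matrix (Fin n) (Fin n) ℝ), 0, 0, 0],
       ![ (1 - d / n) • adjMat G,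
          (-((1 - d / n) ^ 2)) • degMat G,
          (-(d / n)) • (onesMat n - adjMat G - 1),
          (-((d / n) ^ 2)) • (((n : ℝ) - 2) • (1 : Matrix (Fin n) (Fin n) ℝ) - degMat G)],
       ![ 0, 0, (1 : Matrix (Fin n) (Fin n) ℝ), 0]] :
      Fin 4 → Fin 4 → Matrix (Fin n) (Fin n) ℝ) p.1 q.1 p.2 q.2

/-- The `4n × 4n` block matrix `𝓜̂`. -/
def bigMhat {n : ℕ} (d : ℝ) (G : SGraph n) :
    Matrix (Fin 4 × Fin n) (Fin 4 × Fin n) ℝ :=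
  Matrix.of fun p q =>
    (![![ (1 - d / n) • adjMat G,
          (-((1 - d / n) ^ 2)) • degMat G,
          (-(d / n)) • (onesMat n - adjMat G - 1),
          (-((d / n) ^ 2)) • (((n : ℝ) - 1) • (1 : Matrix (Fin n) (Fin n) ℝ) - degMat G)],
       ![0, 0, 0, 0], ![0, 0, 0, 0], ![0, 0, 0, 0]] :
      Fin 4 → Fin 4 → Matrix (Fin n) (Fin n) ℝ) p.1 q.1 p.2 q.2

/-- The `4n × n` matrix `𝒬_k` with blocks `Q^{(k,1-d/n)}, Q^{(k-1,1-d/n)},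
`Q^{(k,-d/n)}, Q^{(k-1,-d/n)}` from top to bottom. -/
def bigQ {n : ℕ} (d : ℝ) (G : SGraph n) (k : ℤ) : Matrix (Fin 4 × Fin n) (Fin n) ℝ :=
  Matrix.of fun p y =>
    (![Qmat d G k (1 - d / n), Qmat d G (k - 1) (1 - d / n),
       Qmat d G k (-(d / n)), Qmat d G (k - 1) (-(d / n))] :
      Fin 4 → Matrix (Fin n) (Fin n) ℝ) p.1 p.2 y

end

/-!
Split a non-backtracking path `u → v` of length `k + 1` at its first step `u → y`: the rest is a
non-backtracking path `y → v` whose first step avoids `u`, of total weight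
`g_k(y) = N^{(k)}_{yv} - (weight of the paths y → u → ⋯ → v)`. Splitting the subtracted paths
once more gives `g_{r+2} = N^{(r+2)}_{yv} - w N^{(r+1)}_{uv} + w² g_r` with `w = W_{uy}`, solved by
`g_r = Q^{(r,w)}_{yv} - w Q^{(r-1,w)}_{uv}`. Since `W_{uy}` is `1 - d/n` on the neighbours of `u`
and `-d/n` on the other `y ≠ u`, summing `W_{uy} g_k(y)` over `y` exhibits `N^{(k+1)}` as the top
block of `𝓜̂ 𝒬_k`. The other blocks of `𝓜 𝒬_k = 𝒬_{k+1}` are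
`Q^{(k+1,ρ)} = N^{(k+1)} + ρ² Q^{(k-1,ρ)}` and shifts of the index.
-/

section Paths

variable {β : Type*} {k : ℕ}

lemma pget_one_of_length_zero (γ : Fin 1 → β) : pget γ 1 = pget γ 0 := rfl

lemma pget_cons_zero (x : β) (δ : Fin (k + 1) → β) :
    pget (Fin.cons x δ : Fin (k + 2) → β) 0 = x := rfl

lemma pget_cons_succ (x : β) (δ : Fin (k + 1) → β) (i : ℕ) :
    pget (Fin.cons x δ : Fin (k + 2) → β) (i + 1) = pget δ i := by
  have : (⟨min (i + 1) (k + 1), by omega⟩ : Fin (k + 2)) = Fin.succ ⟨min i k, by omega⟩ := by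
    ext; simp [Nat.add_min_add_right]
  rw [pget, this, Fin.cons_succ, pget]

variable {n : ℕ}

lemma isNB_cons (x : Fin n) (δ : Fin (k + 1) → Fin n) :
    IsNB (k + 1) (Fin.cons x δ : Fin (k + 2) → Fin n) ↔
      x ≠ pget δ 0 ∧ x ≠ pget δ 1 ∧ IsNB k δ := by
  constructor
  · rintro ⟨hpath, hnb⟩
    refine ⟨by simpa [pget_cons_zero, pget_cons_succ] using hpath 0 (by omega), ?_,
      fun i hi => by simpa [pget_cons_zero, pget_cons_succ] using hpath (i + 1) (by omega),
      fun i hi => by simpa [pget_cons_zero, pget_cons_succ] using hnb (i + 1) (by omega)⟩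
    rcases k with _ | k
    · simpa [pget_one_of_length_zero, pget_cons_zero, pget_cons_succ] using hpath 0 (by omega)
    · simpa [pget_cons_zero, pget_cons_succ] using hnb 0 (by omega)
  · rintro ⟨h0, h1, hpath, hnb⟩
    refine ⟨fun i hi => ?_, fun i hi => ?_⟩
    · rcases i with _ | i
      · simpa [pget_cons_zero, pget_cons_succ] using h0
      · simpa [pget_cons_zero, pget_cons_succ] using hpath i (by omega)
    · rcases i with _ | i
      · simpa [pget_cons_zero, pget_cons_succ] using h1
      · simpa [pget_cons_zero, pget_cons_succ] using hnb i (by omega)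

lemma Xweight_cons (d : ℝ) (G : SGraph n) (x : Fin n) (δ : Fin (k + 1) → Fin n) :
    Xweight d G (k + 1) (Fin.cons x δ : Fin (k + 2) → Fin n) =
      W d G x (pget δ 0) * Xweight d G k δ := by
  simp only [Xweight, Finset.prod_range_succ', pget_cons_succ, pget_cons_zero]
  ring

lemma sum_fun_fin_succ_eq_sum_cons {M : Type*} [AddCommMonoid M]
    (f : (Fin (k + 2) → Fin n) → M) :
    ∑ γ, f γ = ∑ x : Fin n, ∑ δ : Fin (k + 1) → Fin n, f (Fin.cons x δ) := by
  rw [← (Fin.consEquiv fun _ : Fin (k + 2) => Fin n).sum_comp, Fintype.sum_prod_type]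
  rfl

end Paths

section Weights

variable {n : ℕ} (d : ℝ) (G : SGraph n)

lemma adj_comm (u v : Fin n) : adj G u v = adj G v u := by
  unfold adj
  rcases lt_trichotomy u v with h | rfl | h
  · rw [dif_pos h, dif_neg (by omega), dif_pos h]
  · rfl
  · rw [dif_neg (by omega), dif_pos h, dif_pos h]

lemma adj_self (u : Fin n) : adj G u u = false := by
  simp [adj]

lemma W_comm (u v : Fin n) : W d G u v = W d G v u := by
  rw [W, W, adj_comm]

end Weights

noncomputable section NonBacktracking

variable {n : ℕ} (d : ℝ) (G : SGraph n)

-- For `r = 0` the clamped `pget γ 1` is `pget γ 0`, so only `y = x` contributes.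
def NnbVia (r : ℕ) (x v y : Fin n) : ℝ :=
  ∑ γ : Fin (r + 1) → Fin n,
    if IsNB r γ ∧ pget γ 0 = x ∧ pget γ r = v ∧ pget γ 1 = y then Xweight d G r γ else 0

lemma Nnb_eq_sum_NnbVia (r : ℕ) (x v : Fin n) :
    Nnb d G r x v = ∑ y, NnbVia d G r x v y := by
  unfold Nnb NnbVia
  rw [Finset.sum_comm]
  refine Finset.sum_congr rfl fun γ _ => ?_
  by_cases h : IsNB r γ ∧ pget γ 0 = x ∧ pget γ r = v
  · simp [h]
  · rw [if_neg h]
    exact (Finset.sum_eq_zero fun y _ => if_neg fun h' => h ⟨h'.1, h'.2.1, h'.2.2.1⟩).symm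

lemma NnbVia_zero_of_ne {x y : Fin n} (hxy : x ≠ y) (v : Fin n) : NnbVia d G 0 x v y = 0 :=
  Finset.sum_eq_zero fun γ _ => if_neg fun ⟨_, hx, _, hy⟩ =>
    hxy (by rw [← hx, ← hy, pget_one_of_length_zero])

lemma NnbVia_succ (r : ℕ) (x v y : Fin n) :
    NnbVia d G (r + 1) x v y =
      if y = x then 0 else W d G x y * (Nnb d G r y v - NnbVia d G r y v x) := by
  unfold NnbVia Nnb
  rw [sum_fun_fin_succ_eq_sum_cons, Finset.sum_eq_single x]
  · simp only [isNB_cons, pget_cons_zero, pget_cons_succ, Xweight_cons]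
    split_ifs with hyx
    · exact Finset.sum_eq_zero fun δ _ => if_neg fun h => h.1.1 (hyx ▸ h.2.2.2).symm
    · rw [← Finset.sum_sub_distrib, Finset.mul_sum]
      refine Finset.sum_congr rfl fun δ _ => ?_
      by_cases h : IsNB r δ ∧ pget δ 0 = y ∧ pget δ r = v
      · obtain ⟨hnb, rfl, rfl⟩ := h
        by_cases h1 : pget δ 1 = x
        · simp [h1]
        · simp [hnb, h1, Ne.symm hyx, Ne.symm h1]
      · rw [if_neg fun h' => h ⟨h'.1.2.2, h'.2.2.2, h'.2.2.1⟩, if_neg h,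
          if_neg fun h' => h ⟨h'.1, h'.2.1, h'.2.2.1⟩, sub_zero, mul_zero]
  · intro z _ hzx
    exact Finset.sum_eq_zero fun δ _ => if_neg fun h => hzx h.2.1
  · simp

lemma Nmat_apply (r : ℕ) (x v : Fin n) : Nmat d G r x v = Nnb d G r x v := by
  rcases r with _ | r
  · have hnb (γ : Fin 1 → Fin n) : IsNB 0 γ :=
      ⟨fun _ h => absurd h (by omega), fun _ h => absurd h (by omega)⟩
    rw [Nnb, ← (Equiv.funUnique (Fin 1) (Fin n)).symm.sum_comp]
    simp only [Nmat, Matrix.one_apply, hnb, Xweight, Finset.prod_range_zero, true_and]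
    simp only [show ∀ z, pget ((Equiv.funUnique (Fin 1) (Fin n)).symm z) 0 = z from fun _ => rfl]
    split_ifs with h
    · simp [h]
    · exact (Finset.sum_eq_zero fun z _ => if_neg fun ⟨hzx, hzv⟩ => h (hzx ▸ hzv)).symm
  · rfl

end NonBacktracking

section Recursion

variable {n : ℕ} (d : ℝ) (G : SGraph n)

lemma Qmat_of_neg {k : ℤ} (hk : k < 0) (ρ : ℝ) : Qmat d G k ρ = 0 := if_pos hk

lemma Qmat_zero (ρ : ℝ) : Qmat d G 0 ρ = 1 := by simp [Qmat, Nmat]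

lemma Qmat_one (ρ : ℝ) : Qmat d G 1 ρ = Nmat d G 1 := by simp [Qmat]

lemma Qmat_add_two {k : ℤ} (hk : -2 ≤ k) (ρ : ℝ) :
    Qmat d G (k + 2) ρ = Nmat d G (k + 2).toNat + ρ ^ 2 • Qmat d G k ρ := by
  rcases lt_or_ge k 0 with hneg | hnonneg
  · have hhalf : (k + 2).toNat / 2 = 0 := by omega
    rw [Qmat_of_neg d G hneg, smul_zero, add_zero, Qmat, if_neg (by omega), hhalf]
    simp
  · have htoNat : (k + 2).toNat = k.toNat + 2 := by omega
    have hhalf : (k.toNat + 2) / 2 = k.toNat / 2 + 1 := by omega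
    rw [Qmat, Qmat, if_neg (by omega), if_neg (by omega), htoNat, hhalf,
      Finset.sum_range_succ', Finset.smul_sum, add_comm]
    congr 1
    · simp
    · refine Finset.sum_congr rfl fun j _ => ?_
      rw [smul_smul, ← pow_add, show 2 + 2 * j = 2 * (j + 1) by ring,
        show k.toNat + 2 - 2 * (j + 1) = k.toNat - 2 * j by omega]

lemma Nnb_sub_NnbVia_eq {u y : Fin n} (hyu : y ≠ u) (v : Fin n) (r : ℕ) :
    Nnb d G r y v - NnbVia d G r y v u =
      Qmat d G r (W d G u y) y v - W d G u y * Qmat d G (r - 1) (W d G u y) u v := by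
  have hy_via_u (r : ℕ) :
      NnbVia d G (r + 1) y v u = W d G u y * (Nnb d G r u v - NnbVia d G r u v y) := by
    rw [NnbVia_succ, if_neg hyu.symm, W_comm]
  have hu_via_y (r : ℕ) :
      NnbVia d G (r + 1) u v y = W d G u y * (Nnb d G r y v - NnbVia d G r y v u) := by
    rw [NnbVia_succ, if_neg hyu]
  induction r using Nat.twoStepInduction with
  | zero =>
    rw [NnbVia_zero_of_ne d G hyu, Nat.cast_zero, zero_sub,
      Qmat_of_neg d G (show (-1 : ℤ) < 0 by norm_num), Qmat_zero, ← Nmat_apply]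
    simp [Nmat]
  | one =>
    rw [hy_via_u, NnbVia_zero_of_ne d G hyu.symm, Nat.cast_one, sub_self, Qmat_one, Qmat_zero,
      ← Nmat_apply, ← Nmat_apply]
    simp [Nmat]
  | more r ih _ =>
    have hcast : ((r + 2 : ℕ) : ℤ) = (r : ℤ) + 2 := by push_cast; ring
    rw [hcast, show (r : ℤ) + 2 - 1 = ((r : ℤ) - 1) + 2 by ring, Qmat_add_two d G (by omega),
      Qmat_add_two d G (by omega), show ((r : ℤ) + 2).toNat = r + 2 by omega,
      show ((r : ℤ) - 1 + 2).toNat = r + 1 by omega]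
    simp only [Matrix.add_apply, Matrix.smul_apply, smul_eq_mul, Nmat_apply]
    linear_combination -hy_via_u (r + 1) + W d G u y * hu_via_y r + W d G u y ^ 2 * ih

end Recursion

section MatrixIdentity

variable {n : ℕ} (d : ℝ) (G : SGraph n)

lemma ite_W_eq_adjMat_add_nonadjMat (f : ℝ → ℝ) (u y : Fin n) :
    (if y = u then 0 else f (W d G u y)) =
      adjMat G u y * f (1 - d / n) + (onesMat n - adjMat G - 1) u y * f (-(d / n)) := by
  by_cases hyu : y = u
  · subst hyu
    simp [adjMat, onesMat, adj_self]
  · by_cases hadj : adj G u y <;>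
      simp [W, adjMat, onesMat, hyu, Ne.symm hyu, hadj]

lemma sum_adjMat_apply (u : Fin n) : ∑ y, adjMat G u y = degMat G u u := by
  simp [adjMat, degMat]

lemma sum_nonadjMat_apply (u : Fin n) :
    ∑ y, (onesMat n - adjMat G - 1) u y = (n : ℝ) - 1 - degMat G u u := by
  simp only [onesMat, Matrix.sub_apply, Matrix.of_apply, Matrix.one_apply, sum_sub_distrib,
    sum_const, card_univ, Fintype.card_fin, nsmul_eq_mul, mul_one, sum_adjMat_apply, sum_ite_eq,
    mem_univ, if_true]
  ring

lemma degMat_mul_apply (Q : Matrix (Fin n) (Fin n) ℝ) (u v : Fin n) :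
    (degMat G * Q) u v = degMat G u u * Q u v := by
  rw [degMat, Matrix.diagonal_mul, Matrix.diagonal_apply_eq]

lemma Nmat_succ (k : ℕ) :
    Nmat d G (k + 1) =
      (1 - d / n) • adjMat G * Qmat d G k (1 - d / n) +
      (-((1 - d / n) ^ 2)) • degMat G * Qmat d G (k - 1) (1 - d / n) +
      (-(d / n)) • (onesMat n - adjMat G - 1) * Qmat d G k (-(d / n)) +
      (-((d / n) ^ 2)) • (((n : ℝ) - 1) • (1 : Matrix (Fin n) (Fin n) ℝ) - degMat G) *
        Qmat d G (k - 1) (-(d / n)) := by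
  ext u v
  set f : Fin n → ℝ → ℝ := fun y ρ => ρ * (Qmat d G k ρ y v - ρ * Qmat d G (k - 1) ρ u v)
  have hvia (y : Fin n) : NnbVia d G (k + 1) u v y = if y = u then 0 else f y (W d G u y) := by
    rw [NnbVia_succ]
    split_ifs with hyu
    · rfl
    · rw [Nnb_sub_NnbVia_eq d G hyu]
  rw [Nmat_apply, Nnb_eq_sum_NnbVia]
  rw [Finset.sum_congr rfl fun y _ => (hvia y).trans (ite_W_eq_adjMat_add_nonadjMat d G (f y) u y)]
  simp only [f, mul_sub, Finset.sum_add_distrib, Finset.sum_sub_distrib, ← Finset.sum_mul,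
    mul_left_comm _ (1 - d / n), mul_left_comm _ (-(d / n)), ← Finset.mul_sum,
    sum_adjMat_apply, sum_nonadjMat_apply]
  -- Folded, so that `Matrix.sub_mul` below only splits `((n - 1) • 1 - degMat G) * _`.
  set O := onesMat n - adjMat G - 1
  simp only [Matrix.add_apply, Matrix.smul_mul, Matrix.smul_apply, smul_eq_mul, Matrix.sub_mul,
    Matrix.one_mul, Matrix.sub_apply, degMat_mul_apply]
  simp only [Matrix.mul_apply]
  ring

end MatrixIdentity

lemma Matrix.of_blocks_mul_of_blocks {ι κ m m' l R : Type*} [Fintype κ] [Fintype m']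
    [NonUnitalNonAssocSemiring R] (B : ι → κ → Matrix m m' R) (C : κ → Matrix m' l R)
    (C' : ι → Matrix m l R) (h : ∀ i, ∑ j, B i j * C j = C' i) :
    (Matrix.of fun (p : ι × m) (q : κ × m') => B p.1 q.1 p.2 q.2) *
        Matrix.of (fun (q : κ × m') (y : l) => C q.1 q.2 y) =
      Matrix.of fun (p : ι × m) (y : l) => C' p.1 p.2 y := by
  ext ⟨i, u⟩ y
  simp only [Matrix.mul_apply, Matrix.of_apply, Fintype.sum_prod_type, ← h i, Matrix.sum_apply]

section BlockRecursion

variable {n : ℕ} (d : ℝ) (G : SGraph n)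

lemma bigM_mul_bigQ (k : ℕ) : bigM d G * bigQ d G k = bigQ d G (k + 1) := by
  refine Matrix.of_blocks_mul_of_blocks _ _ _ fun i => ?_
  have hQ (ρ : ℝ) : Qmat d G ((k : ℤ) + 1) ρ = Nmat d G (k + 1) + ρ ^ 2 • Qmat d G (k - 1) ρ := by
    rw [show (k : ℤ) + 1 = ((k : ℤ) - 1) + 2 by ring, Qmat_add_two d G (by omega),
      show ((k : ℤ) - 1 + 2).toNat = k + 1 by omega]
  fin_cases i <;> simp only [Fin.sum_univ_four, Fin.isValue, Fin.zero_eta, Fin.mk_one,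
    Fin.reduceFinMk, Matrix.cons_val', Matrix.cons_val_fin_one, Matrix.cons_val_zero,
    Matrix.cons_val_one, Matrix.cons_val, one_mul, zero_mul, add_zero, zero_add,
    add_sub_cancel_right]
  all_goals
    rw [hQ, Nmat_succ]
    simp only [Matrix.sub_mul, Matrix.smul_mul, Matrix.one_mul]
    module

lemma bigMhat_mul_bigQ (k : ℕ) :
    bigMhat d G * bigQ d G k =
      Matrix.of fun (p : Fin 4 × Fin n) (y : Fin n) =>
        if p.1 = 0 then Nmat d G (k + 1) p.2 y else 0 := by
  refine (Matrix.of_blocks_mul_of_blocks _ _ (fun i => if i = 0 then Nmat d G (k + 1) else 0)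
    fun i => ?_).trans ?_
  · fin_cases i <;> simp [Fin.sum_univ_four, Nmat_succ]
  · ext p y
    simp only [Matrix.of_apply]
    split_ifs <;> rfl

end BlockRecursion

/-- The recursions `𝓜 𝒬_k = 𝒬_{k+1}` and
`𝓜̂ 𝒬_k = (N^{(k+1)}, 0, 0, 0)ᵀ` hold for every `k ≥ 1`. -/
theorem matrix_recursion (n : ℕ) (d : ℝ) (G : SGraph n) :
    ∀ k : ℤ, 1 ≤ k →
      bigM d G * bigQ d G k = bigQ d G (k + 1) ∧
      bigMhat d G * bigQ d G k =
        Matrix.of fun (p : Fin 4 × Fin n) (y : Fin n) =>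
          if p.1 = 0 then Nmat d G (k.toNat + 1) p.2 y else 0 := by
  intro k hk
  lift k to ℕ using by omega
  exact ⟨bigM_mul_bigQ d G k, by simpa using bigMhat_mul_bigQ d G k⟩
end

section
/- Let G be drawn from the stochastic block model 𝔾(n, a_n/n, b_n/n) and let ℓ = ℓ_n be a sequence with ℓ_n · log(max(2 d_n, 2)) = o(log n), where d_n = (a_n+b_n)/2. Then P[G is ℓ-tangle-free] ≥ 1 − n^{−1+o(1)}; that is, for every δ > 0 there is N such that for all n ≥ N, the probability that G contains an ℓ_n-tangle as a subgraph is at most n^{−1+δ}. -/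
open Filter Finset
open scoped Classical

/-!
If the ball of radius `ℓ` about some vertex has more edges than vertices, then two of its edges
lie outside a breadth-first search tree rooted at the centre; these two edges and the tree paths
from their endpoints to the root span a set `S` of at most `4(ℓ + 1)` vertices carrying at least
`|S| + 1` edges. A fixed set of `r + 1` potential edges is present with probability at most
`(M/n)^(r+1)`, where `M = max(a + b, 2)`, and there are at most `n^r e^(2r) r²` such
configurations on `r` vertices, so the union bound gives
`P[G is not ℓ-tangle-free] ≤ (4ℓ + 5)³ (e² M)^(4ℓ + 5) / n = n^(-1 + o(1))`.
-/

namespace SimpleGraph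

variable {V : Type*} (Γ : SimpleGraph V) {v u : V}

theorem Reachable.exists_adj_dist_add_one (hr : Γ.Reachable v u) (hne : u ≠ v) :
    ∃ w, Γ.Adj w u ∧ Γ.dist v w + 1 = Γ.dist v u := by
  obtain ⟨p, hp⟩ := hr.exists_walk_length_eq_dist
  obtain ⟨w, hadj, q, hq⟩ := p.reverse.exists_eq_cons_of_ne hne
  have hlen : q.length + 1 = Γ.dist v u := by
    rw [← hp, ← Walk.length_reverse p, hq, Walk.length_cons]
  have hle : Γ.dist v w ≤ q.length := dist_comm (G := Γ) ▸ Γ.dist_le q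
  refine ⟨w, hadj.symm, ?_⟩
  rcases hadj.symm.diff_dist_adj (u := v) with h | h | h <;> omega

noncomputable def bfsParent (v u : V) : V :=
  if h : Γ.Reachable v u ∧ u ≠ v then (h.1.exists_adj_dist_add_one Γ h.2).choose else v

variable {Γ}

@[simp]
theorem bfsParent_self (v : V) : Γ.bfsParent v v = v := by
  simp [bfsParent]

theorem adj_bfsParent (hr : Γ.Reachable v u) (hne : u ≠ v) : Γ.Adj (Γ.bfsParent v u) u := by
  rw [bfsParent, dif_pos ⟨hr, hne⟩]
  exact (hr.exists_adj_dist_add_one Γ hne).choose_spec.1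

theorem dist_bfsParent_add_one (hr : Γ.Reachable v u) (hne : u ≠ v) :
    Γ.dist v (Γ.bfsParent v u) + 1 = Γ.dist v u := by
  rw [bfsParent, dif_pos ⟨hr, hne⟩]
  exact (hr.exists_adj_dist_add_one Γ hne).choose_spec.2

theorem Reachable.bfsParent (hr : Γ.Reachable v u) : Γ.Reachable v (Γ.bfsParent v u) := by
  by_cases hne : u = v
  · simp [hne]
  · exact hr.trans (adj_bfsParent hr hne).symm.reachable

theorem Reachable.iterate_bfsParent (hr : Γ.Reachable v u) (j : ℕ) :
    Γ.Reachable v ((Γ.bfsParent v)^[j] u) ∧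
      Γ.dist v ((Γ.bfsParent v)^[j] u) = Γ.dist v u - j := by
  induction j with
  | zero => exact ⟨hr, rfl⟩
  | succ j ih =>
    rw [Function.iterate_succ_apply']
    refine ⟨ih.1.bfsParent, ?_⟩
    by_cases hne : (Γ.bfsParent v)^[j] u = v
    · have := ih.2
      rw [hne, dist_self] at this
      rw [hne, bfsParent_self, dist_self]
      omega
    · have := dist_bfsParent_add_one ih.1 hne
      omega

theorem injOn_mk_bfsParent :
    Set.InjOn (fun u => s(u, Γ.bfsParent v u)) {u | Γ.Reachable v u ∧ u ≠ v} := by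
  intro u hu u' hu' heq
  rcases Sym2.eq_iff.1 heq with ⟨h, -⟩ | ⟨h₁, h₂⟩
  · exact h
  · have hd := dist_bfsParent_add_one hu.1 hu.2
    have hd' := dist_bfsParent_add_one hu'.1 hu'.2
    rw [h₂] at hd
    rw [← h₁] at hd'
    omega

variable (Γ) in
noncomputable def edgesWithin [Fintype V] (S : Finset V) : Finset (Sym2 V) :=
  {e | e ∈ Γ.edgeSet ∧ ∀ x ∈ e, x ∈ S}

@[simp]
theorem mem_edgesWithin [Fintype V] {S : Finset V} {e : Sym2 V} :
    e ∈ Γ.edgesWithin S ↔ e ∈ Γ.edgeSet ∧ ∀ x ∈ e, x ∈ S := by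
  simp [edgesWithin]

variable [DecidableEq V] (Γ v)

noncomputable def bfsAncestors (C : Finset V) (ℓ : ℕ) : Finset V :=
  (C ×ˢ range (ℓ + 1)).image fun p => (Γ.bfsParent v)^[p.2] p.1

noncomputable def bfsTreeEdges (T : Finset V) : Finset (Sym2 V) :=
  (T.erase v).image fun u => s(u, Γ.bfsParent v u)

variable {Γ v}

theorem card_bfsTreeEdges {T : Finset V} (hvT : v ∈ T) (hT : ∀ u ∈ T, Γ.Reachable v u) :
    (Γ.bfsTreeEdges v T).card = T.card - 1 := by
  rw [bfsTreeEdges, card_image_of_injOn, card_erase_of_mem hvT]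
  intro u hu u' hu'
  simp only [coe_erase, Set.mem_sdiff, mem_coe, Set.mem_singleton_iff] at hu hu'
  exact injOn_mk_bfsParent ⟨hT u hu.1, hu.2⟩ ⟨hT u' hu'.1, hu'.2⟩

theorem bfsTreeEdges_subset_edgesWithin [Fintype V] {T : Finset V}
    (hT : ∀ u ∈ T, Γ.Reachable v u) (hTP : ∀ u ∈ T, u ≠ v → Γ.bfsParent v u ∈ T) :
    Γ.bfsTreeEdges v T ⊆ Γ.edgesWithin T := by
  intro e he
  obtain ⟨u, hu, rfl⟩ := mem_image.1 he
  obtain ⟨hne, huT⟩ := mem_erase.1 hu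
  refine mem_edgesWithin.2 ⟨(adj_bfsParent (hT u huT) hne).symm, fun x hx => ?_⟩
  rcases Sym2.mem_iff.1 hx with rfl | rfl
  exacts [huT, hTP u huT hne]

theorem card_sub_one_add_card_le_card_edgesWithin [Fintype V] {T : Finset V} (hvT : v ∈ T)
    (hT : ∀ u ∈ T, Γ.Reachable v u) (hTP : ∀ u ∈ T, u ≠ v → Γ.bfsParent v u ∈ T)
    {X : Finset (Sym2 V)} (hX : X ⊆ Γ.edgesWithin T \ Γ.bfsTreeEdges v T) :
    T.card - 1 + X.card ≤ (Γ.edgesWithin T).card := by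
  rw [← card_bfsTreeEdges hvT hT, ← card_union_of_disjoint
    (disjoint_right.2 fun e he => (Finset.mem_sdiff.1 (hX he)).2)]
  exact card_le_card (union_subset (bfsTreeEdges_subset_edgesWithin hT hTP)
    (hX.trans sdiff_subset))

theorem mem_edgesWithin_sdiff_bfsTreeEdges_of_subset [Fintype V] {B T : Finset V}
    {e : Sym2 V} (he : e ∈ Γ.edgesWithin B \ Γ.bfsTreeEdges v B) (heT : ∀ x ∈ e, x ∈ T) :
    e ∈ Γ.edgesWithin T \ Γ.bfsTreeEdges v T := by
  obtain ⟨heB, hnt⟩ := Finset.mem_sdiff.1 he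
  refine Finset.mem_sdiff.2 ⟨mem_edgesWithin.2 ⟨(mem_edgesWithin.1 heB).1, heT⟩, fun ht => ?_⟩
  obtain ⟨u, hu, rfl⟩ := mem_image.1 ht
  exact hnt (mem_image.2
    ⟨u, mem_erase.2 ⟨(mem_erase.1 hu).1, (mem_edgesWithin.1 heB).2 u (Sym2.mem_mk_left _ _)⟩, rfl⟩)

section Ancestors

variable {C : Finset V} {ℓ : ℕ}

theorem card_bfsAncestors_le : (Γ.bfsAncestors v C ℓ).card ≤ C.card * (ℓ + 1) :=
  card_image_le.trans (by rw [card_product, card_range])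

theorem subset_bfsAncestors : C ⊆ Γ.bfsAncestors v C ℓ := fun c hc =>
  mem_image.2 ⟨(c, 0), mem_product.2 ⟨hc, by simp⟩, rfl⟩

theorem reachable_of_mem_bfsAncestors (hC : ∀ c ∈ C, Γ.Reachable v c) {u : V}
    (hu : u ∈ Γ.bfsAncestors v C ℓ) : Γ.Reachable v u := by
  obtain ⟨⟨c, j⟩, hcj, rfl⟩ := mem_image.1 hu
  exact ((hC c (mem_product.1 hcj).1).iterate_bfsParent j).1

theorem root_mem_bfsAncestors (hC : ∀ c ∈ C, Γ.Reachable v c ∧ Γ.dist v c ≤ ℓ) {c : V}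
    (hc : c ∈ C) : v ∈ Γ.bfsAncestors v C ℓ := by
  refine mem_image.2 ⟨(c, Γ.dist v c), mem_product.2 ⟨hc, by simpa using (hC c hc).2⟩, ?_⟩
  obtain ⟨hr, hd⟩ := (hC c hc).1.iterate_bfsParent (Γ.dist v c)
  rw [Nat.sub_self, hr.dist_eq_zero_iff] at hd
  exact hd.symm

theorem bfsParent_mem_bfsAncestors (hC : ∀ c ∈ C, Γ.Reachable v c ∧ Γ.dist v c ≤ ℓ) {u : V}
    (hu : u ∈ Γ.bfsAncestors v C ℓ) (hne : u ≠ v) :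
    Γ.bfsParent v u ∈ Γ.bfsAncestors v C ℓ := by
  obtain ⟨⟨c, j⟩, hcj, rfl⟩ := mem_image.1 hu
  obtain ⟨hc, hj⟩ := mem_product.1 hcj
  obtain ⟨hr, hd⟩ := (hC c hc).1.iterate_bfsParent j
  have hpos := hr.pos_dist_of_ne hne.symm
  have hj : j + 1 < ℓ + 1 := by have := (hC c hc).2; simp at hj; omega
  exact mem_image.2 ⟨(c, j + 1), mem_product.2 ⟨hc, mem_range.2 hj⟩,
    Function.iterate_succ_apply' _ _ _⟩

end Ancestors

/-- Two edges of the ball outside the BFS tree, together with the tree paths from their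
endpoints to the root, span the small set. -/
theorem exists_card_lt_card_edgesWithin [Fintype V] {ℓ : ℕ} {B : Finset V} (hvB : v ∈ B)
    (hB : ∀ u ∈ B, Γ.Reachable v u ∧ Γ.dist v u ≤ ℓ)
    (hcard : B.card < (Γ.edgesWithin B).card) :
    ∃ S : Finset V, S.card ≤ 4 * (ℓ + 1) ∧ S.card < (Γ.edgesWithin S).card := by
  obtain ⟨e₁, he₁, e₂, he₂, hne⟩ := one_lt_card.1 <| show
      1 < (Γ.edgesWithin B \ Γ.bfsTreeEdges v B).card by
    have : (Γ.bfsTreeEdges v B).card ≤ B.card - 1 :=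
      card_image_le.trans (card_erase_of_mem hvB).le
    have := le_card_sdiff (Γ.bfsTreeEdges v B) (Γ.edgesWithin B)
    have := card_pos.2 ⟨v, hvB⟩
    omega
  set C := e₁.toFinset ∪ e₂.toFinset
  have hC : ∀ c ∈ C, Γ.Reachable v c ∧ Γ.dist v c ≤ ℓ := by
    intro c hc
    refine hB c ?_
    rcases mem_union.1 hc with hc | hc
    exacts [(mem_edgesWithin.1 (Finset.mem_sdiff.1 he₁).1).2 c (Sym2.mem_toFinset.1 hc),
      (mem_edgesWithin.1 (Finset.mem_sdiff.1 he₂).1).2 c (Sym2.mem_toFinset.1 hc)]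
  have hCcard : C.card ≤ 4 := by
    have h₂ : ∀ e : Sym2 V, e.toFinset.card ≤ 2 := fun e => by
      rw [Sym2.card_toFinset]; split_ifs <;> omega
    exact (card_union_le _ _).trans (by linarith [h₂ e₁, h₂ e₂])
  set S := Γ.bfsAncestors v C ℓ
  have hvS : v ∈ S :=
    root_mem_bfsAncestors hC (mem_union_left _ (Sym2.mem_toFinset.2 (Sym2.out_fst_mem e₁)))
  have hX : {e₁, e₂} ⊆ Γ.edgesWithin S \ Γ.bfsTreeEdges v S := by
    intro e he
    rcases mem_insert.1 he with rfl | he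
    · exact mem_edgesWithin_sdiff_bfsTreeEdges_of_subset he₁ fun x hx =>
        subset_bfsAncestors (mem_union_left _ (Sym2.mem_toFinset.2 hx))
    · rw [mem_singleton.1 he]
      exact mem_edgesWithin_sdiff_bfsTreeEdges_of_subset he₂ fun x hx =>
        subset_bfsAncestors (mem_union_right _ (Sym2.mem_toFinset.2 hx))
  have hedges := card_sub_one_add_card_le_card_edgesWithin hvS
    (fun u hu => reachable_of_mem_bfsAncestors (fun c hc => (hC c hc).1) hu)
    (fun u hu => bfsParent_mem_bfsAncestors hC hu) hX
  rw [card_pair hne] at hedges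
  have := card_pos.2 ⟨v, hvS⟩
  exact ⟨S, card_bfsAncestors_le.trans (Nat.mul_le_mul_right _ hCcard), by omega⟩

end SimpleGraph

section Multigraph

variable {n : ℕ}

theorem mem_edgeSet_msupp {m : Sym2 (Fin n) → ℕ} {e : Sym2 (Fin n)} :
    e ∈ (msupp m).edgeSet ↔ ¬ e.IsDiag ∧ 0 < m e := by
  induction e using Sym2.ind with
  | h x y => rfl

theorem edgeCountIn_le_card_edgesWithin {m : Sym2 (Fin n) → ℕ} (hm : ∀ e, m e ≤ 1)
    (S : Finset (Fin n)) : edgeCountIn m S ≤ ((msupp m).edgesWithin S).card := by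
  rw [edgeCountIn, SimpleGraph.edgesWithin, card_filter]
  refine sum_le_sum fun e _ => ?_
  by_cases hpos : 0 < m e
  · simp only [mem_edgeSet_msupp, hpos, and_true, mem_coe]
    split_ifs <;> simp [hm e]
  · simp [Nat.eq_zero_of_not_pos hpos]

theorem mball_zero (m : Sym2 (Fin n) → ℕ) (v : Fin n) : mball m 0 v = {v} := by
  ext u
  constructor
  · rintro ⟨p, hp⟩
    exact (p.eq_of_length_eq_zero (Nat.le_zero.1 hp)).symm
  · rintro rfl
    exact ⟨.nil, le_rfl⟩

theorem edgeCountIn_singleton (m : Sym2 (Fin n) → ℕ) (v : Fin n) : edgeCountIn m {v} = 0 :=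
  sum_eq_zero fun e _ => if_neg fun ⟨hd, hv⟩ => hd <| by
    induction e using Sym2.ind with
    | h x y => simp_all

theorem mTangleFree_zero (m : Sym2 (Fin n) → ℕ) : MTangleFree 0 m := fun v => by
  simp [mball_zero, edgeCountIn_singleton]

end Multigraph

section Witness

variable {n : ℕ}

theorem exists_edgeIdx_of_adj {G : SGraph n} {x y : Fin n} (h : adj G x y = true) :
    ∃ e : EdgeIdx n, G e = true ∧ s(e.1.1, e.1.2) = s(x, y) := by
  unfold adj at h
  split_ifs at h
  exacts [⟨_, h, rfl⟩, ⟨_, h, Sym2.eq_swap⟩]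

def edgeIdxWithin (S : Finset (Fin n)) : Finset (EdgeIdx n) :=
  {e | e.1.1 ∈ S ∧ e.1.2 ∈ S}

theorem card_edgeIdxWithin_le (S : Finset (Fin n)) : (edgeIdxWithin S).card ≤ S.card ^ 2 := by
  rw [sq, ← card_product]
  refine card_le_card_of_injOn Subtype.val (fun e he => ?_) Subtype.val_injective.injOn
  simpa [edgeIdxWithin] using he

theorem sum_sum_powersetCard_edgeIdxWithin_le (r : ℕ) {c : ℝ} (hc : 0 ≤ c) :
    ∑ S ∈ powersetCard r (univ : Finset (Fin n)),
        ∑ _J ∈ powersetCard (r + 1) (edgeIdxWithin S), c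
      ≤ n.choose r * (r ^ 2).choose (r + 1) * c := by
  calc _ ≤ ∑ S ∈ powersetCard r (univ : Finset (Fin n)), ((r ^ 2).choose (r + 1) : ℝ) * c := by
        refine sum_le_sum fun S hS => ?_
        rw [sum_const, card_powersetCard, nsmul_eq_mul]
        gcongr
        rw [← (mem_powersetCard.1 hS).2]
        exact card_edgeIdxWithin_le S
    _ = _ := by
        rw [sum_const, card_powersetCard, card_univ, Fintype.card_fin, nsmul_eq_mul, mul_assoc]

theorem card_edgesWithin_msupp_gmult_le (G : SGraph n) (S : Finset (Fin n)) :
    ((msupp (gmult G)).edgesWithin S).card ≤ {e ∈ edgeIdxWithin S | G e = true}.card := by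
  refine card_le_card_of_surjOn (fun e : EdgeIdx n => s(e.1.1, e.1.2)) fun e he => ?_
  obtain ⟨hedge, heS⟩ := SimpleGraph.mem_edgesWithin.1 (mem_coe.1 he)
  obtain ⟨x, y, hxy, rfl⟩ : ∃ x y, adj G x y = true ∧ e = s(x, y) := by
    by_contra h
    simp [mem_edgeSet_msupp, gmult, h] at hedge
  obtain ⟨i, hi, hie⟩ := exists_edgeIdx_of_adj hxy
  refine ⟨i, mem_filter.2 ⟨mem_filter.2 ⟨mem_univ _, ?_, ?_⟩, hi⟩, hie⟩
  · exact heS _ (hie ▸ Sym2.mem_mk_left _ _)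
  · exact heS _ (hie ▸ Sym2.mem_mk_right _ _)

theorem exists_dense_of_not_mTangleFree {ℓ : ℕ} {G : SGraph n}
    (h : ¬ MTangleFree ℓ (gmult G)) :
    ∃ S : Finset (Fin n), S.card ≤ 4 * (ℓ + 1) ∧
      ∃ J ∈ powersetCard (S.card + 1) (edgeIdxWithin S), ∀ e ∈ J, G e = true := by
  obtain ⟨v, hv⟩ : ∃ v, (mball (gmult G) ℓ v).ncard
      < edgeCountIn (gmult G) (mball (gmult G) ℓ v) := by
    simpa [MTangleFree] using h
  set B := (mball (gmult G) ℓ v).toFinset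
  have hB : ∀ u ∈ B, (msupp (gmult G)).Reachable v u ∧ (msupp (gmult G)).dist v u ≤ ℓ :=
    fun u hu => by
      obtain ⟨p, hp⟩ := Set.mem_toFinset.1 hu
      exact ⟨⟨p⟩, (SimpleGraph.dist_le p).trans hp⟩
  have hvB : v ∈ B := Set.mem_toFinset.2 ⟨.nil, Nat.zero_le ℓ⟩
  have hcard : B.card < ((msupp (gmult G)).edgesWithin B).card := by
    have hle := edgeCountIn_le_card_edgesWithin (m := gmult G)
      (fun e => by unfold gmult; split_ifs <;> omega) B
    rw [Set.coe_toFinset] at hle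
    rw [Set.ncard_eq_toFinset_card'] at hv
    exact hv.trans_le hle
  obtain ⟨S, hS, hSE⟩ := SimpleGraph.exists_card_lt_card_edgesWithin hvB hB hcard
  obtain ⟨J, hJ, hJcard⟩ :=
    exists_subset_card_eq (hSE.trans_le (card_edgesWithin_msupp_gmult_le G S))
  exact ⟨S, hS, J, mem_powersetCard.2 ⟨hJ.trans (filter_subset _ _), hJcard⟩,
    fun e he => (mem_filter.1 (hJ he)).2⟩

end Witness

theorem Fintype.sum_prod_bernoulli_ite_forall_mem {ι : Type*} [Fintype ι] [DecidableEq ι]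
    (p : ι → ℝ) (J : Finset ι) :
    ∑ g : ι → Bool, (if ∀ i ∈ J, g i = true then ∏ i, (if g i then p i else 1 - p i) else 0)
      = ∏ i ∈ J, p i := by
  set w : ι → Bool → ℝ := fun i β => if β then p i else if i ∈ J then 0 else 1 - p i
  have hw : ∀ g : ι → Bool,
      (if ∀ i ∈ J, g i = true then ∏ i, (if g i then p i else 1 - p i) else 0)
        = ∏ i, w i (g i) := by
    intro g
    split_ifs with hg
    · refine Finset.prod_congr rfl fun i _ => ?_
      by_cases hi : i ∈ J
      · simp [w, hg i hi]
      · simp [w, hi]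
    · push Not at hg
      obtain ⟨i, hi, hgi⟩ := hg
      exact (prod_eq_zero (mem_univ i) (by simp [w, hgi, hi])).symm
  rw [Fintype.sum_congr _ _ hw, ← Fintype.prod_sum, ← Fintype.prod_ite_mem J p]
  refine Finset.prod_congr rfl fun i _ => ?_
  by_cases hi : i ∈ J <;> simp [w, hi]

section Probability

variable {n : ℕ} {a b : ℝ}

def allPresent (J : Finset (EdgeIdx n)) : Set (SampleSpace n) :=
  {ω | ∀ e ∈ J, ω.2 e = true}

theorem bmass_nonneg (ha₀ : 0 ≤ a / n) (ha₁ : a / n ≤ 1) (hb₀ : 0 ≤ b / n) (hb₁ : b / n ≤ 1)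
    (ω : SampleSpace n) : 0 ≤ bmass a b n ω := by
  refine mul_nonneg (by positivity) (prod_nonneg fun e _ => ?_)
  split_ifs <;> linarith

theorem bPr_le_sum_of_subset_biUnion (hm : ∀ ω, 0 ≤ bmass a b n ω) {ι : Type*} (t : Finset ι)
    {A : Set (SampleSpace n)} {B : ι → Set (SampleSpace n)} (hA : A ⊆ ⋃ i ∈ t, B i) :
    bPr a b n A ≤ ∑ i ∈ t, bPr a b n (B i) := by
  simp only [bPr]
  rw [sum_comm]
  refine sum_le_sum fun ω _ => ?_
  split_ifs with hω
  · obtain ⟨i, hi, hωi⟩ := Set.mem_iUnion₂.1 (hA hω)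
    calc bmass a b n ω = if ω ∈ B i then bmass a b n ω else 0 := (if_pos hωi).symm
      _ ≤ _ := single_le_sum (f := fun i => if ω ∈ B i then bmass a b n ω else 0)
          (fun j _ => ite_nonneg (hm ω) le_rfl) hi
  · exact sum_nonneg fun j _ => ite_nonneg (hm ω) le_rfl

theorem bPr_allPresent_le {q : ℝ} (ha : 0 ≤ a / n) (hb : 0 ≤ b / n) (haq : a / n ≤ q)
    (hbq : b / n ≤ q) (J : Finset (EdgeIdx n)) :
    bPr a b n (allPresent J) ≤ q ^ J.card := by
  set P : (Fin n → Bool) → EdgeIdx n → ℝ :=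
    fun τ e => if τ e.1.1 = τ e.1.2 then a / n else b / n
  have hτ : ∀ τ, ∑ g : SGraph n,
      (if ((τ, g) : SampleSpace n) ∈ allPresent J then bmass a b n (τ, g) else 0)
        = (1 / 2) ^ n * ∏ e ∈ J, P τ e := by
    intro τ
    rw [← Fintype.sum_prod_bernoulli_ite_forall_mem (P τ) J, mul_sum]
    refine sum_congr rfl fun g _ => ?_
    have hmem : ((τ, g) : SampleSpace n) ∈ allPresent J ↔ ∀ e ∈ J, g e = true := Iff.rfl
    by_cases hg : ∀ e ∈ J, g e = true
    · simp only [if_pos hg, if_pos (hmem.2 hg), bmass, P]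
    · simp only [if_neg hg, if_neg (mt hmem.1 hg), mul_zero]
  calc bPr a b n (allPresent J)
      = ∑ τ : Fin n → Bool, (1 / 2) ^ n * ∏ e ∈ J, P τ e :=
        (Fintype.sum_prod_type _).trans (sum_congr rfl fun τ _ => hτ τ)
    _ ≤ ∑ τ : Fin n → Bool, (1 / 2) ^ n * q ^ J.card := by
        gcongr with τ
        calc ∏ e ∈ J, P τ e ≤ ∏ e ∈ J, q :=
              prod_le_prod (fun e _ => by simp only [P]; split_ifs <;> assumption)
                (fun e _ => by simp only [P]; split_ifs <;> assumption)
          _ = q ^ J.card := prod_const q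
    _ = q ^ J.card := by
        rw [sum_const, card_univ, Fintype.card_fun, Fintype.card_bool, Fintype.card_fin,
          nsmul_eq_mul, ← mul_assoc, Nat.cast_pow, ← mul_pow]
        norm_num

end Probability

section Estimates

open Real
open scoped Nat

/-- The `1 / r!` from choosing the `r` vertices absorbs the superexponential factor `r^(2r)` from
choosing the `r + 1` edges among at most `r²` pairs. -/
theorem choose_mul_choose_sq_le (N r : ℕ) :
    (N.choose r : ℝ) * (r ^ 2).choose (r + 1) ≤ N ^ r * exp 1 ^ (2 * r) * r ^ 2 := by
  have hpow : (r : ℝ) ^ r / r ! ≤ exp 1 ^ r := by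
    rw [← exp_nat_mul, mul_one]
    exact pow_div_factorial_le_exp _ (Nat.cast_nonneg r) r
  have hfac : (r ! : ℝ) ≤ (r + 1)! := by exact_mod_cast Nat.factorial_le (Nat.le_succ r)
  calc (N.choose r : ℝ) * (r ^ 2).choose (r + 1)
      ≤ (N ^ r / r !) * ((r ^ 2 : ℕ) ^ (r + 1) / (r + 1)!) :=
        mul_le_mul (Nat.choose_le_pow_div r N) (Nat.choose_le_pow_div (r + 1) (r ^ 2))
          (by positivity) (by positivity)
    _ ≤ (N ^ r / r !) * ((r ^ 2 : ℕ) ^ (r + 1) / r !) := by gcongr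
    _ = N ^ r * ((r : ℝ) ^ r / r !) ^ 2 * r ^ 2 := by push_cast; ring
    _ ≤ N ^ r * (exp 1 ^ r) ^ 2 * r ^ 2 := by gcongr
    _ = N ^ r * exp 1 ^ (2 * r) * r ^ 2 := by ring

theorem sum_choose_mul_choose_sq_le {N : ℕ} (hN : 0 < N) {M : ℝ} (hM : 1 ≤ M) (R : ℕ) :
    ∑ r ∈ range (R + 1), (N.choose r : ℝ) * (r ^ 2).choose (r + 1) * (M / N) ^ (r + 1)
      ≤ (R + 1 : ℝ) ^ 3 * (exp 1 ^ 2 * M) ^ (R + 1) / N := by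
  have hN' : (0 : ℝ) < N := Nat.cast_pos.2 hN
  have he : 1 ≤ exp 1 ^ 2 := one_le_pow₀ (one_le_exp zero_le_one)
  calc _ ≤ ∑ r ∈ range (R + 1), (R + 1 : ℝ) ^ 2 * (exp 1 ^ 2 * M) ^ (R + 1) / N := by
        refine sum_le_sum fun r hr => ?_
        have hr : r ≤ R := Nat.lt_succ_iff.1 (mem_range.1 hr)
        calc (N.choose r : ℝ) * (r ^ 2).choose (r + 1) * (M / N) ^ (r + 1)
            ≤ N ^ r * exp 1 ^ (2 * r) * r ^ 2 * (M / N) ^ (r + 1) := by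
              gcongr ?_ * _
              exact choose_mul_choose_sq_le N r
          _ = r ^ 2 * ((exp 1 ^ 2) ^ r * M ^ (r + 1)) / N := by
              rw [div_pow, pow_succ (N : ℝ)]
              field_simp
              ring
          _ ≤ (R + 1) ^ 2 * ((exp 1 ^ 2) ^ (R + 1) * M ^ (R + 1)) / N := by
              gcongr
              · exact_mod_cast hr.trans (Nat.le_succ R)
              · omega
          _ = (R + 1 : ℝ) ^ 2 * (exp 1 ^ 2 * M) ^ (R + 1) / N := by ring
    _ = (R + 1 : ℝ) ^ 3 * (exp 1 ^ 2 * M) ^ (R + 1) / N := by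
        rw [sum_const, card_range, nsmul_eq_mul]
        push_cast
        ring

theorem cube_mul_pow_le_rpow {δ M : ℝ} {ℓ N : ℕ} (hℓ : 1 ≤ ℓ) (hM : 2 ≤ M) (hN : 0 < N)
    (h : 99 * (ℓ * log M) ≤ δ * log (N : ℝ)) :
    (4 * ℓ + 5 : ℝ) ^ 3 * (exp 1 ^ 2 * M) ^ (4 * ℓ + 5) ≤ (N : ℝ) ^ δ := by
  have hℓ' : (1 : ℝ) ≤ ℓ := by exact_mod_cast hℓ
  have hlogM : 1 / 2 ≤ log M :=
    (by linarith [log_two_gt_d9] : (1 : ℝ) / 2 ≤ log 2).trans (log_le_log two_pos hM)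
  have hlog5 : log (4 * ℓ + 5 : ℝ) ≤ 4 * ℓ + 4 := by
    linarith [log_le_sub_one_of_pos (by positivity : (0 : ℝ) < 4 * ℓ + 5)]
  rw [← exp_log (by positivity : (0 : ℝ) < (4 * ℓ + 5) ^ 3 * (exp 1 ^ 2 * M) ^ (4 * ℓ + 5)),
    rpow_def_of_pos (Nat.cast_pos.2 hN), mul_comm (log (N : ℝ)), exp_le_exp,
    log_mul (by positivity) (by positivity), log_pow, log_pow, log_mul (by positivity)
    (by positivity), log_pow, log_exp]
  push_cast
  nlinarith

end Estimates

theorem bPr_not_mTangleFree_zero {n : ℕ} (a b : ℝ) :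
    bPr a b n {ω | ¬ MTangleFree 0 (gmult ω.2)} = 0 := by
  simp [bPr, mTangleFree_zero]

open Real in
theorem bPr_not_mTangleFree_le {n : ℕ} {a b M : ℝ} (ha : 0 ≤ a) (hb : 0 ≤ b) (haM : a ≤ M)
    (hbM : b ≤ M) (hM : 1 ≤ M) (hMn : M ≤ n) (ℓ : ℕ) :
    bPr a b n {ω | ¬ MTangleFree ℓ (gmult ω.2)}
      ≤ (4 * ℓ + 5 : ℝ) ^ 3 * (exp 1 ^ 2 * M) ^ (4 * ℓ + 5) / n := by
  have hn : (0 : ℝ) < n := by linarith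
  have haq : a / n ≤ M / n := by gcongr
  have hbq : b / n ≤ M / n := by gcongr
  have hq : M / n ≤ 1 := (div_le_one hn).2 hMn
  have hm : ∀ ω, 0 ≤ bmass a b n ω :=
    bmass_nonneg (by positivity) (haq.trans hq) (by positivity) (hbq.trans hq)
  calc bPr a b n {ω | ¬ MTangleFree ℓ (gmult ω.2)}
      ≤ ∑ r ∈ range (4 * (ℓ + 1) + 1), bPr a b n (⋃ S ∈ powersetCard r univ,
          ⋃ J ∈ powersetCard (r + 1) (edgeIdxWithin S), allPresent J) := by
        refine bPr_le_sum_of_subset_biUnion hm _ fun ω hω => ?_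
        obtain ⟨S, hS, J, hJ, hJω⟩ := exists_dense_of_not_mTangleFree hω
        simp only [Set.mem_iUnion]
        exact ⟨S.card, mem_range.2 (Nat.lt_succ_of_le hS), S,
          mem_powersetCard.2 ⟨subset_univ S, rfl⟩, J, hJ, hJω⟩
    _ ≤ ∑ r ∈ range (4 * (ℓ + 1) + 1), ∑ S ∈ powersetCard r univ,
          ∑ J ∈ powersetCard (r + 1) (edgeIdxWithin S), bPr a b n (allPresent J) :=
        sum_le_sum fun r _ => (bPr_le_sum_of_subset_biUnion hm _ subset_rfl).trans
          (sum_le_sum fun S _ => bPr_le_sum_of_subset_biUnion hm _ subset_rfl)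
    _ ≤ ∑ r ∈ range (4 * (ℓ + 1) + 1), ∑ S ∈ powersetCard r (univ : Finset (Fin n)),
          ∑ J ∈ powersetCard (r + 1) (edgeIdxWithin S), (M / n) ^ (r + 1) := by
        gcongr with r _ S _ J hJ
        rw [← (mem_powersetCard.1 hJ).2]
        exact bPr_allPresent_le (by positivity) (by positivity) haq hbq J
    _ ≤ ∑ r ∈ range (4 * (ℓ + 1) + 1),
          (n.choose r : ℝ) * (r ^ 2).choose (r + 1) * (M / n) ^ (r + 1) := by
        gcongr with r
        exact sum_sum_powersetCard_edgeIdxWithin_le r (by positivity)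
    _ ≤ (4 * ℓ + 5 : ℝ) ^ 3 * (exp 1 ^ 2 * M) ^ (4 * ℓ + 5) / n := by
        have := sum_choose_mul_choose_sq_le (Nat.cast_pos.1 hn) hM (4 * (ℓ + 1))
        convert this using 3 <;> push_cast <;> ring

/-- If `G ~ 𝔾(n, a_n/n, b_n/n)` and `ℓ_n · log(max(2 d_n, 2)) = o(log n)`,
then `G` is `ℓ_n`-tangle-free with probability at least `1 - n^{-1+o(1)}`. -/
theorem tangle_free_whp (a b : ℕ → ℝ) (ha : ∀ n, 0 ≤ a n) (hb : ∀ n, 0 ≤ b n)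
    (ℓ : ℕ → ℕ)
    (hℓ : Filter.Tendsto
      (fun n : ℕ =>
        (ℓ n : ℝ) * Real.log (max (2 * ((a n + b n) / 2)) 2) / Real.log n)
      Filter.atTop (nhds 0)) :
    ∀ δ > (0 : ℝ), ∃ N : ℕ, ∀ n ≥ N,
      bPr (a n) (b n) n
          {ω : SampleSpace n | ¬ MTangleFree (ℓ n) (gmult ω.2)}
        ≤ (n : ℝ) ^ (-1 + δ) := by
  intro δ hδ
  -- `min δ 1 / 100 ≤ δ / 99` feeds `cube_mul_pow_le_rpow`; `min δ 1 / 100 ≤ 1` gives `M ≤ n`.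
  have hε : 0 < min δ 1 / 100 := by positivity
  obtain ⟨N, hN⟩ := eventually_atTop.1
    ((hℓ.eventually (gt_mem_nhds hε)).and (eventually_ge_atTop 2))
  refine ⟨N, fun n hn => ?_⟩
  obtain ⟨hratio, hn2⟩ := hN n hn
  have hn : (2 : ℝ) ≤ n := by exact_mod_cast hn2
  rcases Nat.eq_zero_or_pos (ℓ n) with hℓ0 | hℓ1
  · rw [hℓ0, bPr_not_mTangleFree_zero]
    positivity
  set M := max (2 * ((a n + b n) / 2)) 2
  have hM2 : 2 ≤ M := le_max_right _ _
  have habM : a n + b n ≤ M := by linarith [le_max_left (2 * ((a n + b n) / 2)) 2]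
  have hlogM : 0 ≤ Real.log M := Real.log_nonneg (by linarith)
  have hkey : (ℓ n : ℝ) * Real.log M ≤ min δ 1 / 100 * Real.log n :=
    ((div_lt_iff₀ (Real.log_pos (by linarith))).1 hratio).le
  have hMn : M ≤ n := by
    have : (1 : ℝ) ≤ ℓ n := by exact_mod_cast hℓ1
    rw [← Real.log_le_log_iff (by positivity) (by positivity)]
    nlinarith [min_le_right δ 1, Real.log_nonneg (by linarith : (1 : ℝ) ≤ n)]
  calc _ ≤ (4 * ℓ n + 5 : ℝ) ^ 3 * (Real.exp 1 ^ 2 * M) ^ (4 * ℓ n + 5) / n :=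
        bPr_not_mTangleFree_le (ha n) (hb n) (by linarith [hb n]) (by linarith [ha n])
          (by linarith) hMn (ℓ n)
    _ ≤ (n : ℝ) ^ δ / n := by
        gcongr
        exact cube_mul_pow_le_rpow hℓ1 hM2 (by omega)
          (by nlinarith [min_le_left δ 1, Real.log_nonneg (by linarith : (1 : ℝ) ≤ n)])
    _ = (n : ℝ) ^ (-1 + δ) := by
        rw [Real.rpow_add (by positivity), Real.rpow_neg_one]
        ring
end
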